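/- arXiv:1108.4810 — 6 statements merged into one kernel-verified Lean document; each statement's English description precedes it below -/
import Mathlib

section
/- Every graph on at least R(k, k+1) vertices has an adjacency matrix with at least k nonpositive eigenvalues, where R(k, k+1) is the Ramsey number guaranteeing either an independent set of size k or a clique of size k+1. -/
open Matrix

/-- The adjacency matrix of a simple graph over `ℝ` is Hermitian. -/
theorem adjHerm {V : Type*} [Fintype V] [DecidableEq V] (G : SimpleGraph V)
    [DecidableRel G.Adj] : (G.adjMatrix ℝ).IsHermitian := by
  rw [Matrix.IsHermitian, conjTranspose_eq_transpose_of_trivial]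
  exact G.isSymm_adjMatrix

/-- The number of nonpositive eigenvalues (with multiplicity) of the adjacency matrix. -/
noncomputable def nonposCount {V : Type*} [Fintype V] [DecidableEq V] (G : SimpleGraph V) : ℕ :=
  letI := Classical.decRel G.Adj
  (Finset.univ.filter fun i => (adjHerm G).eigenvalues i ≤ 0).card

open Module Finset in
/-- If a subspace of dimension at least `k` is nonpositive for the quadratic form of a
Hermitian matrix, then the matrix has at least `k` nonpositive eigenvalues. -/
lemma key_quad {n : ℕ} {A : Matrix (Fin n) (Fin n) ℝ} (hA : A.IsHermitian) (k : ℕ)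
    (W : Submodule ℝ (EuclideanSpace ℝ (Fin n))) (hWk : k ≤ finrank ℝ W)
    (hq : ∀ x : EuclideanSpace ℝ (Fin n), x ∈ W → A *ᵥ x ⬝ᵥ x ≤ 0) :
    k ≤ (Finset.univ.filter fun i => hA.eigenvalues i ≤ 0).card := by
  by_contra hcon
  push_neg at hcon
  set m := (Finset.univ.filter fun i => hA.eigenvalues i ≤ 0).card with hm
  set b := hA.eigenvectorBasis with hb
  let φ : EuclideanSpace ℝ (Fin n) →ₗ[ℝ] ({i : Fin n // hA.eigenvalues i ≤ 0} → ℝ) :=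
    { toFun := fun x j => b.repr x j.1
      map_add' := by intro x y; funext j; simp
      map_smul' := by intro c x; funext j; simp }
  set U := LinearMap.ker φ with hU
  have hrn : finrank ℝ (LinearMap.range φ) + finrank ℝ U = n := by
    rw [hU, LinearMap.finrank_range_add_finrank_ker]
    simp
  have hrange : finrank ℝ (LinearMap.range φ) ≤ m := by
    calc finrank ℝ (LinearMap.range φ)
        ≤ finrank ℝ ({i : Fin n // hA.eigenvalues i ≤ 0} → ℝ) :=
          Submodule.finrank_le (LinearMap.range φ)
      _ = m := by simp [Fintype.card_subtype, hm]
  have hsup : finrank ℝ ↥(W ⊔ U) ≤ n := by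
    have := Submodule.finrank_le (W ⊔ U)
    simpa using this
  have hsum := Submodule.finrank_sup_add_finrank_inf_eq W U
  have hpos : 0 < finrank ℝ ↥(W ⊓ U) := by omega
  have hne : W ⊓ U ≠ ⊥ := by
    intro h
    rw [h, finrank_bot] at hpos
    omega
  obtain ⟨x, hx, hx0⟩ := Submodule.exists_mem_ne_zero_of_ne_bot hne
  have hxW : x ∈ W := hx.1
  have hxU : φ x = 0 := hx.2
  have hzero : ∀ i : Fin n, hA.eigenvalues i ≤ 0 → b.repr x i = 0 := fun i hi =>
    congrFun hxU ⟨i, hi⟩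
  -- compute the quadratic form in the eigenbasis
  set T := Matrix.toEuclideanLin A with hT
  have hTs : (Matrix.toEuclideanLin A).IsSymmetric := (isHermitian_iff_isSymmetric.mp hA)
  have hTx : ∀ z : EuclideanSpace ℝ (Fin n), T z = A *ᵥ z := fun z => rfl
  have hrepr : ∀ i : Fin n, b.repr (T x) i = hA.eigenvalues i * b.repr x i := by
    intro i
    rw [b.repr_apply_apply, b.repr_apply_apply, ← hTs (b i) x]
    have hTb : (Matrix.toEuclideanLin A) (b i) = hA.eigenvalues i • (b i) := by
      have := hA.mulVec_eigenvectorBasis i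
      rw [← hb] at this
      rw [Matrix.toEuclideanLin_apply, this]
      rfl
    rw [hTb, real_inner_smul_left]
  have hform : A *ᵥ x ⬝ᵥ x = ∑ i, hA.eigenvalues i * b.repr x i * b.repr x i := by
    have h1 : A *ᵥ x ⬝ᵥ x = (inner ℝ (T x) x : ℝ) := by
      rw [← hTx]
      simp [PiLp.inner_apply, dotProduct, mul_comm]
    rw [h1, ← b.repr.inner_map_map (T x) x]
    simp only [PiLp.inner_apply, RCLike.inner_apply, conj_trivial]
    exact Finset.sum_congr rfl fun i _ => by rw [hrepr i]; ring
  have hx0' : b.repr x ≠ 0 := fun h => hx0 (by simpa using congrArg b.repr.symm h)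
  obtain ⟨i₀, hi₀⟩ : ∃ i, b.repr x i ≠ 0 := by
    by_contra h
    push_neg at h
    exact hx0' (PiLp.ext fun i => h i)
  have hi₀pos : 0 < hA.eigenvalues i₀ := by
    by_contra h
    push_neg at h
    exact hi₀ (hzero i₀ h)
  have hpos' : 0 < A *ᵥ x ⬝ᵥ x := by
    rw [hform]
    apply Finset.sum_pos'
    · intro i _
      rcases le_or_gt (hA.eigenvalues i) 0 with h | h
      · rw [hzero i h]; ring_nf; exact le_refl 0
      · have : 0 ≤ b.repr x i * b.repr x i := mul_self_nonneg _
        nlinarith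
    · exact ⟨i₀, Finset.mem_univ _, by
        have : 0 < b.repr x i₀ * b.repr x i₀ := mul_self_pos.mpr hi₀
        nlinarith⟩
  exact absurd (hq x hxW) (not_le.mpr hpos')

open Module Finset in
/-- every graph on at least `R(k, k+1)` vertices has at least `k`
nonpositive adjacency eigenvalues, where `R` is a Ramsey number for independent sets of
size `k` versus cliques of size `k + 1`. -/
theorem stmt6 (k R : ℕ)
    (hR : ∀ n, R ≤ n → ∀ G : SimpleGraph (Fin n),
      (∃ s : Finset (Fin n), s.card = k ∧ ∀ v ∈ s, ∀ w ∈ s, ¬ G.Adj v w) ∨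
      (∃ s : Finset (Fin n), s.card = k + 1 ∧ ∀ v ∈ s, ∀ w ∈ s, v ≠ w → G.Adj v w)) :
    ∀ n, R ≤ n → ∀ G : SimpleGraph (Fin n), k ≤ nonposCount G := by
  intro n hn G
  letI := Classical.decRel G.Adj
  show k ≤ (Finset.univ.filter fun i => (adjHerm G).eigenvalues i ≤ 0).card
  set A := G.adjMatrix ℝ with hA
  rcases hR n hn G with ⟨s, hsk, hind⟩ | ⟨s, hsk, hcl⟩
  · -- independent set of size k
    have hkn : k ≤ n := by
      rw [← hsk]; simpa using s.card_le_univ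
    let ψ : EuclideanSpace ℝ (Fin n) →ₗ[ℝ] ({v : Fin n // v ∉ s} → ℝ) :=
      { toFun := fun x v => x v.1
        map_add' := by intro x y; funext v; rfl
        map_smul' := by intro c x; funext v; rfl }
    apply key_quad (adjHerm G) k (LinearMap.ker ψ)
    · have hrn : finrank ℝ (LinearMap.range ψ) + finrank ℝ (LinearMap.ker ψ) = n := by
        rw [LinearMap.finrank_range_add_finrank_ker]; simp
      have hrange : finrank ℝ (LinearMap.range ψ) ≤ n - k := by
        calc finrank ℝ (LinearMap.range ψ)
            ≤ finrank ℝ ({v : Fin n // v ∉ s} → ℝ) := Submodule.finrank_le (LinearMap.range ψ)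
          _ = n - k := by
              simp only [finrank_pi]
              rw [Fintype.card_subtype]
              have : Finset.univ.filter (fun v => v ∉ s) = sᶜ := by
                ext v; simp
              rw [this, Finset.card_compl, hsk]
              simp
      omega
    · intro x hx
      have hsupp : ∀ v ∉ s, x v = 0 := by
        intro v hv
        have := LinearMap.mem_ker.mp hx
        exact congrFun this ⟨v, hv⟩
      have hform : A *ᵥ x ⬝ᵥ x = ∑ v, ∑ w, A v w * x w * x v := by
        simp only [dotProduct, mulVec, dotProduct, Finset.sum_mul]
      rw [hform]
      have : ∀ v ∈ Finset.univ, ∀ w ∈ Finset.univ, A v w * x w * x v = (0 : ℝ) := by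
        intro v _ w _
        by_cases hv : v ∈ s
        · by_cases hw : w ∈ s
          · have : A v w = 0 := by
              rw [hA, SimpleGraph.adjMatrix_apply, if_neg (hind v hv w hw)]
            rw [this]; ring
          · rw [hsupp w hw]; ring
        · rw [hsupp v hv]; ring
      rw [Finset.sum_congr rfl fun v hv => Finset.sum_congr rfl fun w hw => this v hv w hw]
      simp
  · -- clique of size k+1
    have hkn : k + 1 ≤ n := by
      rw [← hsk]; simpa using s.card_le_univ
    let ψ : EuclideanSpace ℝ (Fin n) →ₗ[ℝ] ({v : Fin n // v ∉ s} → ℝ) × ℝ :=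
      { toFun := fun x => (fun v => x v.1, ∑ v, x v)
        map_add' := by
          intro x y
          ext v
          · rfl
          · show ∑ v, (x v + y v) = ∑ v, x v + ∑ v, y v
            rw [Finset.sum_add_distrib]
        map_smul' := by
          intro c x
          ext v
          · rfl
          · show ∑ v, c * x v = c * ∑ v, x v
            rw [Finset.mul_sum] }
    apply key_quad (adjHerm G) k (LinearMap.ker ψ)
    · have hrn : finrank ℝ (LinearMap.range ψ) + finrank ℝ (LinearMap.ker ψ) = n := by
        rw [LinearMap.finrank_range_add_finrank_ker]; simp
      have hrange : finrank ℝ (LinearMap.range ψ) ≤ (n - (k + 1)) + 1 := by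
        calc finrank ℝ (LinearMap.range ψ)
            ≤ finrank ℝ (({v : Fin n // v ∉ s} → ℝ) × ℝ) :=
              Submodule.finrank_le (LinearMap.range ψ)
          _ = (n - (k + 1)) + 1 := by
              rw [Module.finrank_prod]
              simp only [finrank_pi, finrank_self]
              rw [Fintype.card_subtype]
              have : Finset.univ.filter (fun v => v ∉ s) = sᶜ := by
                ext v; simp
              rw [this, Finset.card_compl, hsk]
              simp
      omega
    · intro x hx
      have hker := LinearMap.mem_ker.mp hx
      have hsupp : ∀ v ∉ s, x v = 0 := by
        intro v hv
        exact congrFun (congrArg Prod.fst hker) ⟨v, hv⟩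
      have hsum : ∑ v, x v = 0 := congrArg Prod.snd hker
      have hform : A *ᵥ x ⬝ᵥ x = ∑ v, ∑ w, A v w * x w * x v := by
        simp only [dotProduct, mulVec, dotProduct, Finset.sum_mul]
      rw [hform]
      have hterm : ∀ v w : Fin n,
          A v w * x w * x v = x w * x v - (if v = w then x v * x v else 0) := by
        intro v w
        by_cases hvw : v = w
        · subst hvw
          have : A v v = 0 := by
            rw [hA, SimpleGraph.adjMatrix_apply, if_neg (G.loopless.irrefl v)]
          rw [this, if_pos rfl]; ring
        · rw [if_neg hvw]
          by_cases hadj : G.Adj v w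
          · have : A v w = 1 := by rw [hA, SimpleGraph.adjMatrix_apply, if_pos hadj]
            rw [this]; ring
          · have hA0 : A v w = 0 := by rw [hA, SimpleGraph.adjMatrix_apply, if_neg hadj]
            have hzz : x w * x v = 0 := by
              by_cases hv : v ∈ s
              · by_cases hw : w ∈ s
                · exact absurd (hcl v hv w hw hvw) hadj
                · rw [hsupp w hw]; ring
              · rw [hsupp v hv]; ring
            rw [hA0, hzz]; ring
      calc ∑ v, ∑ w, A v w * x w * x v
          = ∑ v, ∑ w, (x w * x v - (if v = w then x v * x v else 0)) := by
            exact Finset.sum_congr rfl fun v _ => Finset.sum_congr rfl fun w _ => hterm v w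
        _ = ∑ v : Fin n, (0 - x v * x v) := by
            refine Finset.sum_congr rfl fun v _ => ?_
            rw [Finset.sum_sub_distrib, ← Finset.sum_mul, hsum, Finset.sum_ite_eq]
            simp
        _ ≤ 0 := by
            apply Finset.sum_nonpos
            intro v _
            have := mul_self_nonneg (x v)
            linarith
end

section
/- For every positive integer k there exists an integer N such that every simple graph on at least N vertices has at least k nonpositive adjacency eigenvalues; i.e., NPO(k) is well-defined. -/
open Matrix

open Matrix Finset Module

set_option linter.unusedSectionVars false


lemma ramsey_aux {V : Type*} [DecidableEq V] :
    ∀ (m s t : ℕ), s + t ≤ m → ∀ (G : SimpleGraph V) (A : Finset V), 2 ^ (s + t) ≤ A.card →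
      (∃ S ⊆ A, S.card = s ∧ ∀ u ∈ S, ∀ v ∈ S, u ≠ v → G.Adj u v) ∨
      (∃ S ⊆ A, S.card = t ∧ ∀ u ∈ S, ∀ v ∈ S, ¬ G.Adj u v) := by
  intro m
  induction m with
  | zero =>
    intro s t hst G A _
    have hs : s = 0 := by omega
    subst hs
    exact Or.inl ⟨∅, empty_subset _, card_empty, by simp⟩
  | succ m ih =>
    intro s t hst G A hA
    classical
    rcases Nat.eq_zero_or_pos s with hs | hs
    · subst hs; exact Or.inl ⟨∅, empty_subset _, card_empty, by simp⟩
    rcases Nat.eq_zero_or_pos t with ht | ht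
    · subst ht; exact Or.inr ⟨∅, empty_subset _, card_empty, by simp⟩
    -- pick a vertex
    have hApos : 0 < A.card := lt_of_lt_of_le (Nat.pow_pos (by norm_num)) hA
    obtain ⟨v, hv⟩ := Finset.card_pos.mp hApos
    set B := (A.erase v).filter (fun u => G.Adj v u) with hB
    set C := (A.erase v).filter (fun u => ¬ G.Adj v u) with hC
    have hBC : B.card + C.card = A.card - 1 := by
      rw [hB, hC, Finset.card_filter_add_card_filter_not, Finset.card_erase_of_mem hv]
    have hpow : 2 ^ (s + t - 1) ≤ B.card ∨ 2 ^ (s + t - 1) ≤ C.card := by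
      by_contra h
      push_neg at h
      have : A.card - 1 < 2 ^ (s + t - 1) + 2 ^ (s + t - 1) := by omega
      have h2 : 2 ^ (s + t - 1) + 2 ^ (s + t - 1) = 2 ^ (s + t) := by
        rw [← two_mul, ← pow_succ']
        congr 1
        omega
      omega
    rcases hpow with hpB | hpC
    · have h1 : (s - 1) + t ≤ m := by omega
      have h2 : 2 ^ ((s - 1) + t) ≤ B.card := by
        refine le_trans ?_ hpB
        apply Nat.pow_le_pow_right (by norm_num)
        omega
      rcases ih (s - 1) t h1 G B h2 with ⟨S, hSB, hScard, hSadj⟩ | ⟨S, hSB, hScard, hSind⟩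
      · -- extend clique by v
        have hvS : v ∉ S := fun h => (Finset.mem_erase.mp (Finset.mem_of_mem_filter _ (hSB h))).1 rfl
        refine Or.inl ⟨insert v S, ?_, ?_, ?_⟩
        · intro x hx
          rcases Finset.mem_insert.mp hx with rfl | hx
          · exact hv
          · exact (Finset.mem_erase.mp (Finset.mem_of_mem_filter _ (hSB hx))).2
        · rw [Finset.card_insert_of_notMem hvS, hScard]; omega
        · intro x hx y hy hxy
          rcases Finset.mem_insert.mp hx with rfl | hx'
          · rcases Finset.mem_insert.mp hy with rfl | hy'
            · exact absurd rfl hxy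
            · exact (Finset.mem_filter.mp (hSB hy')).2
          · rcases Finset.mem_insert.mp hy with rfl | hy'
            · exact ((Finset.mem_filter.mp (hSB hx')).2).symm
            · exact hSadj x hx' y hy' hxy
      · exact Or.inr ⟨S, fun x hx => (Finset.mem_erase.mp (Finset.mem_of_mem_filter _ (hSB hx))).2, hScard, hSind⟩
    · have h1 : s + (t - 1) ≤ m := by omega
      have h2 : 2 ^ (s + (t - 1)) ≤ C.card := by
        refine le_trans ?_ hpC
        apply Nat.pow_le_pow_right (by norm_num)
        omega
      rcases ih s (t - 1) h1 G C h2 with ⟨S, hSC, hScard, hSadj⟩ | ⟨S, hSC, hScard, hSind⟩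
      · exact Or.inl ⟨S, fun x hx => (Finset.mem_erase.mp (Finset.mem_of_mem_filter _ (hSC hx))).2, hScard, hSadj⟩
      · have hvS : v ∉ S := fun h => (Finset.mem_erase.mp (Finset.mem_of_mem_filter _ (hSC h))).1 rfl
        refine Or.inr ⟨insert v S, ?_, ?_, ?_⟩
        · intro x hx
          rcases Finset.mem_insert.mp hx with rfl | hx
          · exact hv
          · exact (Finset.mem_erase.mp (Finset.mem_of_mem_filter _ (hSC hx))).2
        · rw [Finset.card_insert_of_notMem hvS, hScard]; omega
        · intro x hx y hy
          rcases Finset.mem_insert.mp hx with rfl | hx'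
          · rcases Finset.mem_insert.mp hy with rfl | hy'
            · exact fun h => G.irrefl h
            · exact (Finset.mem_filter.mp (hSC hy')).2
          · rcases Finset.mem_insert.mp hy with rfl | hy'
            · exact fun h => (Finset.mem_filter.mp (hSC hx')).2 h.symm
            · exact hSind x hx' y hy'


lemma key {V : Type*} [Fintype V] [DecidableEq V] {A : Matrix V V ℝ} (hA : A.IsHermitian)
    (k : ℕ) (W : Submodule ℝ (EuclideanSpace ℝ V)) (hdim : k ≤ Module.finrank ℝ W)
    (hW : ∀ x ∈ W, (inner ℝ x (Matrix.toEuclideanLin A x) : ℝ) ≤ 0) :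
    k ≤ (Finset.univ.filter fun i => hA.eigenvalues i ≤ 0).card := by
  classical
  by_contra hcon
  push_neg at hcon
  set b := hA.eigenvectorBasis with hb
  set T := Matrix.toEuclideanLin A with hT
  have hsym : T.IsSymmetric := Matrix.isHermitian_iff_isSymmetric.mp hA
  have hTb : ∀ j, T (b j) = hA.eigenvalues j • b j := by
    intro j
    have := hA.mulVec_eigenvectorBasis j
    apply PiLp.ext
    intro u
    have h1 : (T (b j)) u = (A *ᵥ ⇑(b j)) u := by
      rw [hT, Matrix.toEuclideanLin_apply]
    rw [h1, this]
    rfl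
  set pos := Finset.univ.filter (fun i => ¬ hA.eigenvalues i ≤ 0) with hpos
  set npos := Finset.univ.filter (fun i => hA.eigenvalues i ≤ 0) with hnpos
  have hcards : npos.card + pos.card = Fintype.card V := by
    rw [hnpos, hpos, Finset.card_filter_add_card_filter_not, Finset.card_univ]
  -- the positive eigenspace
  set P := Submodule.span ℝ (Set.range (fun i : pos => b i)) with hP
  have hli : LinearIndependent ℝ (fun i : pos => b i) :=
    (b.orthonormal.comp (Subtype.val : pos → V) Subtype.val_injective).linearIndependent
  have hPrank : finrank ℝ P = pos.card := by
    rw [hP, finrank_span_eq_card hli, Fintype.card_coe]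
  -- coefficients of elements of P on nonpositive eigenvectors vanish
  have hcoeff : ∀ x ∈ P, ∀ j, hA.eigenvalues j ≤ 0 → (inner ℝ (b j) x : ℝ) = 0 := by
    intro x hx j hj
    induction hx using Submodule.span_induction with
    | mem y hy =>
      obtain ⟨i, rfl⟩ := hy
      have hij : j ≠ (i : V) := by
        intro h
        have := (Finset.mem_filter.mp i.2).2
        rw [← h] at this
        exact this hj
      exact b.orthonormal.2 hij
    | zero => simp
    | add y z _ _ hy hz => rw [inner_add_right, hy, hz, add_zero]
    | smul c y _ hy => rw [inner_smul_right, hy, mul_zero]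
  -- positivity of the quadratic form on P
  have hposform : ∀ x ∈ P, x ≠ 0 → (0:ℝ) < inner ℝ x (T x) := by
    intro x hxP hx0
    have hrepr : ∀ j, b.repr (T x) j = hA.eigenvalues j * b.repr x j := by
      intro j
      rw [b.repr_apply_apply, b.repr_apply_apply, ← hsym (b j) x, hTb j,
        inner_smul_left]
      simp
    have hinner : (inner ℝ x (T x) : ℝ) = ∑ j, hA.eigenvalues j * (b.repr x j)^2 := by
      rw [← b.repr.inner_map_map x (T x)]
      rw [PiLp.inner_apply]
      apply Finset.sum_congr rfl
      intro j _
      rw [hrepr j]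
      simp [RCLike.inner_apply]
      ring
    have hnonneg : ∀ j ∈ Finset.univ, (0:ℝ) ≤ hA.eigenvalues j * (b.repr x j)^2 := by
      intro j _
      by_cases hj : hA.eigenvalues j ≤ 0
      · have : b.repr x j = 0 := by
          rw [b.repr_apply_apply]
          exact hcoeff x hxP j hj
        rw [this]
        simp
      · push_neg at hj
        positivity
    have hex : ∃ j ∈ Finset.univ, (0:ℝ) < hA.eigenvalues j * (b.repr x j)^2 := by
      have hne0 : b.repr x ≠ 0 := fun h => hx0 (by simpa using congrArg b.repr.symm h)
      have hexj : ∃ j, b.repr x j ≠ 0 := by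
        by_contra h
        push_neg at h
        exact hne0 (by ext j; exact h j)
      obtain ⟨j, hj⟩ := hexj
      have hj' : ¬ hA.eigenvalues j ≤ 0 := by
        intro hle
        exact hj (by rw [b.repr_apply_apply]; exact hcoeff x hxP j hle)
      push_neg at hj'
      have hsq : (0:ℝ) < (b.repr x j)^2 :=
        lt_of_le_of_ne (sq_nonneg _) (Ne.symm (pow_ne_zero 2 hj))
      exact ⟨j, Finset.mem_univ j, mul_pos hj' hsq⟩
    rw [hinner]
    obtain ⟨j, hjmem, hjpos⟩ := hex
    exact Finset.sum_pos' hnonneg ⟨j, hjmem, hjpos⟩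
  -- dimension count
  have hfin : finrank ℝ (W ⊔ P : Submodule ℝ (EuclideanSpace ℝ V)) + finrank ℝ (W ⊓ P : Submodule ℝ (EuclideanSpace ℝ V)) = finrank ℝ W + finrank ℝ P :=
    Submodule.finrank_sup_add_finrank_inf_eq W P
  have hle : finrank ℝ (W ⊔ P : Submodule ℝ (EuclideanSpace ℝ V)) ≤ Fintype.card V := by
    have := Submodule.finrank_le (W ⊔ P : Submodule ℝ (EuclideanSpace ℝ V))
    rwa [finrank_euclideanSpace] at this
  have hpos' : 0 < finrank ℝ (W ⊓ P : Submodule ℝ (EuclideanSpace ℝ V)) := by omega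
  have hne : (W ⊓ P : Submodule ℝ (EuclideanSpace ℝ V)) ≠ ⊥ := by
    intro h
    rw [h, finrank_bot] at hpos'
    exact lt_irrefl 0 hpos'
  obtain ⟨x, hxmem, hx0⟩ := Submodule.exists_mem_ne_zero_of_ne_bot hne
  have h1 := hposform x ((Submodule.mem_inf.mp hxmem).2) hx0
  have h2 := hW x ((Submodule.mem_inf.mp hxmem).1)
  linarith


section Rest
variable {V : Type*} [Fintype V] [DecidableEq V]

lemma quad_eq (A : Matrix V V ℝ) (x : EuclideanSpace ℝ V) :
    (inner ℝ x (Matrix.toEuclideanLin A x) : ℝ) = ∑ u, x u * ∑ v, A u v * x v := by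
  rw [PiLp.inner_apply]
  apply Finset.sum_congr rfl
  intro u _
  rw [Matrix.toEuclideanLin_apply]
  simp [RCLike.inner_apply, Matrix.mulVec, dotProduct, mul_comm]

/-- The submodule of vectors supported on `S`. -/
def suppMod (S : Finset V) : Submodule ℝ (EuclideanSpace ℝ V) where
  carrier := {x | ∀ v, v ∉ S → x v = 0}
  add_mem' := by
    intro x y hx hy v hv
    have : (x + y) v = x v + y v := rfl
    rw [this, hx v hv, hy v hv, add_zero]
  zero_mem' := by intro v hv; rfl
  smul_mem' := by
    intro c x hx v hv
    have : (c • x) v = c * x v := rfl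
    rw [this, hx v hv, mul_zero]

lemma mem_suppMod {S : Finset V} {x : EuclideanSpace ℝ V} :
    x ∈ suppMod S ↔ ∀ v, v ∉ S → x v = 0 := Iff.rfl

/-- The submodule of vectors supported on `S` with coordinate sum zero. -/
def cliqueMod (S : Finset V) : Submodule ℝ (EuclideanSpace ℝ V) where
  carrier := {x | (∀ v, v ∉ S → x v = 0) ∧ ∑ v, x v = 0}
  add_mem' := by
    intro x y hx hy
    constructor
    · intro v hv
      have : (x + y) v = x v + y v := rfl
      rw [this, hx.1 v hv, hy.1 v hv, add_zero]
    · have : ∑ v, (x + y) v = ∑ v, (x v + y v) := rfl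
      rw [this, Finset.sum_add_distrib, hx.2, hy.2, add_zero]
  zero_mem' := by
    constructor
    · intro v hv; rfl
    · simp
  smul_mem' := by
    intro c x hx
    constructor
    · intro v hv
      have : (c • x) v = c * x v := rfl
      rw [this, hx.1 v hv, mul_zero]
    · have : ∑ v, (c • x) v = ∑ v, c * x v := rfl
      rw [this, ← Finset.mul_sum, hx.2, mul_zero]

lemma mem_cliqueMod {S : Finset V} {x : EuclideanSpace ℝ V} :
    x ∈ cliqueMod S ↔ (∀ v, v ∉ S → x v = 0) ∧ ∑ v, x v = 0 := Iff.rfl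

lemma singles_linearIndependent (S : Finset V) :
    LinearIndependent ℝ (fun j : S => EuclideanSpace.single (j : V) (1 : ℝ)) := by
  have h0 : (fun j : S => EuclideanSpace.single (j : V) (1 : ℝ)) =
      (fun j : S => (EuclideanSpace.basisFun V ℝ) (j : V)) := by
    funext j
    simp [EuclideanSpace.basisFun_apply]
  rw [h0]
  exact ((EuclideanSpace.basisFun V ℝ).orthonormal.comp
    (Subtype.val : S → V) Subtype.val_injective).linearIndependent

lemma span_singles_finrank (S : Finset V) :
    finrank ℝ (Submodule.span ℝ (Set.range (fun j : S => EuclideanSpace.single (j : V) (1:ℝ)))) =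
      S.card := by
  rw [finrank_span_eq_card (singles_linearIndependent S), Fintype.card_coe]

lemma suppMod_finrank (S : Finset V) : S.card ≤ finrank ℝ (suppMod S) := by
  have hle : Submodule.span ℝ (Set.range (fun j : S => EuclideanSpace.single (j : V) (1:ℝ))) ≤
      suppMod S := by
    rw [Submodule.span_le]
    rintro _ ⟨j, rfl⟩
    show EuclideanSpace.single (j : V) (1:ℝ) ∈ suppMod S
    intro v hv
    rw [EuclideanSpace.single_apply]
    have : v ≠ (j : V) := fun h => hv (h ▸ j.2)
    simp [this]
  calc S.card = _ := (span_singles_finrank S).symm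
    _ ≤ finrank ℝ (suppMod S) := Submodule.finrank_mono hle

lemma single_sub_mem_cliqueMod {S : Finset V} {u0 j : V} (hu0 : u0 ∈ S) (hj : j ∈ S) :
    EuclideanSpace.single j (1:ℝ) - EuclideanSpace.single u0 (1:ℝ) ∈ cliqueMod S := by
  rw [mem_cliqueMod]
  constructor
  · intro v hv
    have h1 : v ≠ j := fun h => hv (h ▸ hj)
    have h2 : v ≠ u0 := fun h => hv (h ▸ hu0)
    have : (EuclideanSpace.single j (1:ℝ) - EuclideanSpace.single u0 (1:ℝ)) v
        = EuclideanSpace.single j (1:ℝ) v - EuclideanSpace.single u0 (1:ℝ) v := rfl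
    rw [this, EuclideanSpace.single_apply, EuclideanSpace.single_apply]
    simp [h1, h2]
  · have : ∑ v, (EuclideanSpace.single j (1:ℝ) - EuclideanSpace.single u0 (1:ℝ)) v
        = ∑ v, (EuclideanSpace.single j (1:ℝ) v - EuclideanSpace.single u0 (1:ℝ) v) := rfl
    rw [this, Finset.sum_sub_distrib]
    simp [EuclideanSpace.single_apply]

lemma cliqueMod_finrank (S : Finset V) : S.card - 1 ≤ finrank ℝ (cliqueMod S) := by
  rcases Finset.eq_empty_or_nonempty S with rfl | ⟨u0, hu0⟩
  · simp
  have hle : Submodule.span ℝ (Set.range (fun j : S => EuclideanSpace.single (j : V) (1:ℝ))) ≤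
      cliqueMod S ⊔ Submodule.span ℝ {EuclideanSpace.single u0 (1:ℝ)} := by
    rw [Submodule.span_le]
    rintro _ ⟨j, rfl⟩
    show EuclideanSpace.single (j : V) (1:ℝ) ∈
      (cliqueMod S ⊔ Submodule.span ℝ {EuclideanSpace.single u0 (1:ℝ)} :
        Submodule ℝ (EuclideanSpace ℝ V))
    have heq : EuclideanSpace.single (j : V) (1:ℝ) =
        (EuclideanSpace.single (j : V) (1:ℝ) - EuclideanSpace.single u0 (1:ℝ)) +
          EuclideanSpace.single u0 (1:ℝ) := by abel
    rw [heq]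
    exact Submodule.add_mem _
      (Submodule.mem_sup_left (single_sub_mem_cliqueMod hu0 j.2))
      (Submodule.mem_sup_right (Submodule.mem_span_singleton_self _))
  have h1 : S.card ≤ finrank ℝ (cliqueMod S ⊔ Submodule.span ℝ {EuclideanSpace.single u0 (1:ℝ)} :
      Submodule ℝ (EuclideanSpace ℝ V)) := by
    calc S.card = _ := (span_singles_finrank S).symm
      _ ≤ _ := Submodule.finrank_mono hle
  have h2 : finrank ℝ (cliqueMod S ⊔ Submodule.span ℝ {EuclideanSpace.single u0 (1:ℝ)} :
      Submodule ℝ (EuclideanSpace ℝ V)) ≤ finrank ℝ (cliqueMod S) + 1 := by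
    have h3 := Submodule.finrank_sup_add_finrank_inf_eq (cliqueMod S)
      (Submodule.span ℝ {EuclideanSpace.single u0 (1:ℝ)})
    have h4 : finrank ℝ (Submodule.span ℝ ({EuclideanSpace.single u0 (1:ℝ)} :
        Set (EuclideanSpace ℝ V))) ≤ 1 := by
      have := finrank_span_le_card (R := ℝ) ({EuclideanSpace.single u0 (1:ℝ)} :
        Set (EuclideanSpace ℝ V))
      simpa using this
    omega
  omega

end Rest

section Graph
variable {V : Type*} [Fintype V] [DecidableEq V]

lemma indep_bound (G : SimpleGraph V) [DecidableRel G.Adj] (S : Finset V)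
    (hS : ∀ u ∈ S, ∀ v ∈ S, ¬ G.Adj u v) :
    S.card ≤ (Finset.univ.filter fun i => (adjHerm G).eigenvalues i ≤ 0).card := by
  apply key (adjHerm G) S.card (suppMod S) (suppMod_finrank S)
  intro x hx
  rw [quad_eq]
  apply le_of_eq
  apply Finset.sum_eq_zero
  intro u _
  by_cases hxu : x u = 0
  · rw [hxu, zero_mul]
  · have hu : u ∈ S := by by_contra h; exact hxu (hx u h)
    have h0 : ∑ v, (G.adjMatrix ℝ) u v * x v = 0 := by
      apply Finset.sum_eq_zero
      intro v _
      by_cases hxv : x v = 0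
      · rw [hxv, mul_zero]
      · have hv : v ∈ S := by by_contra h; exact hxv (hx v h)
        rw [SimpleGraph.adjMatrix_apply, if_neg (hS u hu v hv), zero_mul]
    rw [h0, mul_zero]

lemma clique_bound (G : SimpleGraph V) [DecidableRel G.Adj] (S : Finset V)
    (hS : ∀ u ∈ S, ∀ v ∈ S, u ≠ v → G.Adj u v) :
    S.card - 1 ≤ (Finset.univ.filter fun i => (adjHerm G).eigenvalues i ≤ 0).card := by
  apply key (adjHerm G) (S.card - 1) (cliqueMod S) (cliqueMod_finrank S)
  intro x hx
  rw [mem_cliqueMod] at hx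
  obtain ⟨hsupp, hsum⟩ := hx
  rw [quad_eq]
  apply Finset.sum_nonpos
  intro u _
  by_cases hxu : x u = 0
  · rw [hxu, zero_mul]
  · have hu : u ∈ S := by by_contra h; exact hxu (hsupp u h)
    have hrow : ∑ v, (G.adjMatrix ℝ) u v * x v = - x u := by
      have hterm : ∀ v ∈ Finset.univ, (G.adjMatrix ℝ) u v * x v
          = x v - (if v = u then x v else 0) := by
        intro v _
        by_cases hvu : v = u
        · subst hvu
          rw [SimpleGraph.adjMatrix_apply, if_neg (G.irrefl), if_pos rfl, zero_mul]
          ring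
        · rw [if_neg hvu, sub_zero]
          by_cases hxv : x v = 0
          · rw [hxv, mul_zero]
          · have hv : v ∈ S := by by_contra h; exact hxv (hsupp v h)
            rw [SimpleGraph.adjMatrix_apply, if_pos (hS u hu v hv (Ne.symm hvu)), one_mul]
      rw [Finset.sum_congr rfl hterm, Finset.sum_sub_distrib, hsum,
        Finset.sum_ite_eq' Finset.univ u (fun v => x v), if_pos (Finset.mem_univ u)]
      ring
    rw [hrow, mul_neg]
    exact neg_nonpos.mpr (mul_self_nonneg _)

end Graph

/-- for every positive integer `k` there is an `N` such that every simple
graph on at least `N` vertices has at least `k` nonpositive adjacency eigenvalues. -/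
theorem stmt7 (k : ℕ) (hk : 1 ≤ k) :
    ∃ N : ℕ, ∀ n, N ≤ n → ∀ G : SimpleGraph (Fin n), k ≤ nonposCount G := by
  refine ⟨2 ^ (2 * k + 2), ?_⟩
  intro n hn G
  letI := Classical.decRel G.Adj
  have hcard : 2 ^ ((k + 1) + (k + 1)) ≤ (Finset.univ : Finset (Fin n)).card := by
    rw [Finset.card_univ, Fintype.card_fin]
    calc 2 ^ ((k + 1) + (k + 1)) = 2 ^ (2 * k + 2) := by ring_nf
      _ ≤ n := hn
  have hram := ramsey_aux (2 * k + 2) (k + 1) (k + 1) (by omega) G Finset.univ hcard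
  have hgoal : nonposCount G
      = (Finset.univ.filter fun i => (adjHerm G).eigenvalues i ≤ 0).card := rfl
  rw [hgoal]
  rcases hram with ⟨S, -, hScard, hSadj⟩ | ⟨S, -, hScard, hSind⟩
  · have := clique_bound G S hSadj
    omega
  · have := indep_bound G S hSind
    omega
end

section
/- Let G be the complement of a disjoint union of complete graphs (i.e., a complete multipartite graph) on n vertices. Then the adjacency matrix of G has at least n-1 nonpositive eigenvalues. -/
open Matrix

/-- Key quadratic-form bound: if the entries of `z` sum to `0`, then the adjacency
quadratic form of a complete multipartite graph is nonpositive at `z`. -/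
lemma key_quad_s9 {n : ℕ} (G : SimpleGraph (Fin n)) [DecidableRel G.Adj] {I : Type*}
    (p : Fin n → I) (hG : ∀ v w, G.Adj v w ↔ p v ≠ p w) (z : Fin n → ℝ)
    (hz : ∑ v, z v = 0) : z ⬝ᵥ (G.adjMatrix ℝ *ᵥ z) ≤ 0 := by
  classical
  have hA : ∀ v w, (G.adjMatrix ℝ) v w = 1 - (if p v = p w then (1:ℝ) else 0) := by
    intro v w
    by_cases h : p v = p w
    · have hna : ¬ G.Adj v w := fun hadj => (hG v w).mp hadj h
      simp [SimpleGraph.adjMatrix_apply, h, hna]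
    · simp [SimpleGraph.adjMatrix_apply, h, (hG v w).mpr h]
  have expand : z ⬝ᵥ (G.adjMatrix ℝ *ᵥ z)
      = (∑ v, z v) * (∑ w, z w)
        - ∑ v, ∑ w, (if p v = p w then z v * z w else 0) := by
    simp only [dotProduct, mulVec, dotProduct]
    rw [Finset.sum_mul_sum, ← Finset.sum_sub_distrib]
    refine Finset.sum_congr rfl fun v _ => ?_
    rw [Finset.mul_sum, ← Finset.sum_sub_distrib]
    refine Finset.sum_congr rfl fun w _ => ?_
    rw [hA v w]
    by_cases h : p v = p w <;> simp [h]
  rw [expand, hz, zero_mul, zero_sub, neg_nonpos]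
  -- the remaining sum is a sum of squares of fiber sums
  set s : I → ℝ := fun i => ∑ v ∈ Finset.univ.filter (fun v => p v = i), z v with hs
  have inner_sum : ∀ v : Fin n, (∑ w, (if p v = p w then z v * z w else 0)) = z v * s (p v) := by
    intro v
    rw [hs, Finset.mul_sum, Finset.sum_filter]
    refine Finset.sum_congr rfl fun w _ => ?_
    by_cases h : p v = p w
    · rw [if_pos h, if_pos h.symm]
    · rw [if_neg h, if_neg (Ne.symm h)]
  calc (0:ℝ) ≤ ∑ i ∈ Finset.univ.image p, (s i)^2 := by positivity
    _ = ∑ i ∈ Finset.univ.image p, ∑ v ∈ Finset.univ.filter (fun v => p v = i), z v * s (p v) := by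
        refine Finset.sum_congr rfl fun i hi => ?_
        rw [sq, hs]
        rw [Finset.sum_mul]
        refine Finset.sum_congr rfl fun v hv => ?_
        rw [(Finset.mem_filter.mp hv).2]
    _ = ∑ v, z v * s (p v) :=
        Finset.sum_fiberwise_of_maps_to (fun v _ => Finset.mem_image_of_mem p (Finset.mem_univ v)) _
    _ = ∑ v, ∑ w, (if p v = p w then z v * z w else 0) := by
        refine Finset.sum_congr rfl fun v _ => (inner_sum v).symm

/-- a complete multipartite graph on `n` vertices (the complement of a
disjoint union of complete graphs) has at least `n - 1` nonpositive adjacency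
eigenvalues. -/
theorem stmt9 (n : ℕ) (G : SimpleGraph (Fin n)) (I : Type*) (p : Fin n → I)
    (hG : ∀ v w, G.Adj v w ↔ p v ≠ p w) :
    n - 1 ≤ nonposCount G := by
  letI := Classical.decRel G.Adj
  by_contra hcon
  push_neg at hcon
  unfold nonposCount at hcon
  set hA := adjHerm G with hAdef
  have hsplit : (Finset.univ.filter fun i => hA.eigenvalues i ≤ 0).card
      + (Finset.univ.filter fun i => ¬ hA.eigenvalues i ≤ 0).card = n := by
    rw [Finset.card_filter_add_card_filter_not]
    simp
  have hTcard : 1 < (Finset.univ.filter fun i => ¬ hA.eigenvalues i ≤ 0).card := by omega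
  obtain ⟨i, hi, j, hj, hij⟩ := Finset.one_lt_card.mp hTcard
  rw [Finset.mem_filter] at hi hj
  have hli : 0 < hA.eigenvalues i := lt_of_not_ge hi.2
  have hlj : 0 < hA.eigenvalues j := lt_of_not_ge hj.2
  set x : Fin n → ℝ := ⇑(hA.eigenvectorBasis i) with hx
  set y : Fin n → ℝ := ⇑(hA.eigenvectorBasis j) with hy
  have hortho := hA.eigenvectorBasis.orthonormal
  rw [orthonormal_iff_ite] at hortho
  have hdot : ∀ k l, (⇑(hA.eigenvectorBasis k)) ⬝ᵥ (⇑(hA.eigenvectorBasis l))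
      = if k = l then 1 else 0 := by
    intro k l
    have := hortho k l
    simpa [PiLp.inner_apply, RCLike.inner_apply, dotProduct, mul_comm] using this
  have hxx : x ⬝ᵥ x = 1 := by rw [hx, hdot]; simp
  have hyy : y ⬝ᵥ y = 1 := by rw [hy, hdot]; simp
  have hxy : x ⬝ᵥ y = 0 := by rw [hx, hy, hdot]; simp [hij]
  have hyx : y ⬝ᵥ x = 0 := by rw [hx, hy, hdot]; simp [hij.symm]
  have hAx : G.adjMatrix ℝ *ᵥ x = hA.eigenvalues i • x := hA.mulVec_eigenvectorBasis i
  have hAy : G.adjMatrix ℝ *ᵥ y = hA.eigenvalues j • y := hA.mulVec_eigenvectorBasis j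
  -- choose coefficients a b not both zero with the entry sum of a•x+b•y zero
  have main : ∀ a b : ℝ, ¬ (a = 0 ∧ b = 0) → (∑ v, (a * x v + b * y v)) = 0 → False := by
    intro a b hab hsum
    set z : Fin n → ℝ := fun v => a * x v + b * y v with hz
    have hquad : z ⬝ᵥ (G.adjMatrix ℝ *ᵥ z)
        = a^2 * hA.eigenvalues i + b^2 * hA.eigenvalues j := by
      have hzd : z = a • x + b • y := by funext v; simp [hz]
      rw [hzd, mulVec_add, mulVec_smul, mulVec_smul, hAx, hAy]
      simp only [add_dotProduct, dotProduct_add, smul_dotProduct, dotProduct_smul,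
        smul_eq_mul, smul_smul]
      rw [hxx, hyy, hxy, hyx]
      ring
    have hpos : 0 < z ⬝ᵥ (G.adjMatrix ℝ *ᵥ z) := by
      rw [hquad]
      rcases not_and_or.mp hab with h | h
      · have : 0 < a^2 * hA.eigenvalues i := by positivity
        nlinarith [sq_nonneg b, mul_nonneg (sq_nonneg b) hlj.le]
      · have : 0 < b^2 * hA.eigenvalues j := by positivity
        nlinarith [sq_nonneg a, mul_nonneg (sq_nonneg a) hli.le]
    exact absurd (key_quad_s9 G p hG z hsum) (not_le.mpr hpos)
  by_cases hsx : (∑ v, x v) = 0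
  · exact main 1 0 (by simp) (by simpa using hsx)
  · refine main (∑ v, y v) (-(∑ v, x v)) (by simp [hsx]) ?_
    rw [Finset.sum_add_distrib, ← Finset.mul_sum, ← Finset.mul_sum]
    ring
end

section
/- For a Hermitian block matrix M = [[M11, M12],[M12*, M22]] with M22 invertible, the inertia of M equals the inertia of M22 plus the inertia of the Schur complement M11 - M12 M22^{-1} M12*. -/
open Matrix

/-- Number of positive eigenvalues of a Hermitian matrix. -/
noncomputable def posCount {n : Type*} [Fintype n] [DecidableEq n]
    {A : Matrix n n ℂ} (hA : A.IsHermitian) : ℕ :=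
  (Finset.univ.filter fun i => 0 < hA.eigenvalues i).card

/-- Number of negative eigenvalues of a Hermitian matrix. -/
noncomputable def negCount {n : Type*} [Fintype n] [DecidableEq n]
    {A : Matrix n n ℂ} (hA : A.IsHermitian) : ℕ :=
  (Finset.univ.filter fun i => hA.eigenvalues i < 0).card

/-- Number of zero eigenvalues of a Hermitian matrix. -/
noncomputable def zeroCount {n : Type*} [Fintype n] [DecidableEq n]
    {A : Matrix n n ℂ} (hA : A.IsHermitian) : ℕ :=
  (Finset.univ.filter fun i => hA.eigenvalues i = 0).card

section Aux
open Finset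

variable {n : Type*} [Fintype n] [DecidableEq n]

-- subspace of x with (C *ᵥ x) j = 0 for all j in S
noncomputable def coordKer (S : Finset n) (C : Matrix n n ℂ) : Submodule ℂ (n → ℂ) :=
  LinearMap.ker ((LinearMap.funLeft ℂ ℂ (Subtype.val : {j // j ∈ S} → n)).comp C.mulVecLin)

lemma mem_coordKer {S : Finset n} {C : Matrix n n ℂ} {x : n → ℂ} :
    x ∈ coordKer S C ↔ ∀ j ∈ S, (C *ᵥ x) j = 0 := by
  simp only [coordKer, LinearMap.mem_ker, LinearMap.comp_apply, mulVecLin_apply,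
    LinearMap.funLeft_apply, funext_iff]
  exact ⟨fun h j hj => h ⟨j, hj⟩, fun h j => h j.1 j.2⟩

lemma finrank_coordKer (S : Finset n) (C : Matrix n n ℂ) [Invertible C] :
    Module.finrank ℂ (coordKer S C) + S.card = Fintype.card n := by
  have hsurj : Function.Surjective
      ((LinearMap.funLeft ℂ ℂ (Subtype.val : {j // j ∈ S} → n)).comp C.mulVecLin) := by
    rw [LinearMap.coe_comp]
    apply Function.Surjective.comp
    · exact LinearMap.funLeft_surjective_of_injective ℂ ℂ _ Subtype.val_injective
    · intro y
      refine ⟨C⁻¹ *ᵥ y, ?_⟩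
      rw [mulVecLin_apply, mulVec_mulVec, mul_nonsing_inv _ (isUnit_det_of_invertible C), one_mulVec]
  have := LinearMap.finrank_range_add_finrank_ker
    ((LinearMap.funLeft ℂ ℂ (Subtype.val : {j // j ∈ S} → n)).comp C.mulVecLin)
  rw [LinearMap.range_eq_top.mpr hsurj] at this
  simp only [finrank_top, Module.finrank_pi, Fintype.card_coe] at this
  rw [coordKer]
  omega

lemma key_le (e f : n → ℝ) (C D : Matrix n n ℂ) [Invertible C] [Invertible D]
    (h : ∀ x : n → ℂ, ∑ j, e j * Complex.normSq ((C *ᵥ x) j)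
      = ∑ j, f j * Complex.normSq ((D *ᵥ x) j)) :
    (univ.filter fun j => 0 < e j).card ≤ (univ.filter fun j => 0 < f j).card := by
  by_contra hlt
  push_neg at hlt
  set W₁ := coordKer (univ.filter fun j => ¬ 0 < e j) C with hW₁
  set W₂ := coordKer (univ.filter fun j => 0 < f j) D with hW₂
  -- dimensions
  have d₁ := finrank_coordKer (univ.filter fun j => ¬ 0 < e j) C
  have d₂ := finrank_coordKer (univ.filter fun j => 0 < f j) D
  have hpart : (univ.filter fun j => 0 < e j).card
      + (univ.filter fun j => ¬ 0 < e j).card = Fintype.card n := by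
    rw [Finset.card_filter_add_card_filter_not]
    exact Finset.card_univ
  -- the intersection is nontrivial
  have hinter : W₁ ⊓ W₂ ≠ ⊥ := by
    intro hbot
    have hsum := Submodule.finrank_sup_add_finrank_inf_eq W₁ W₂
    rw [hbot, finrank_bot, add_zero] at hsum
    have htop : Module.finrank ℂ ↥(W₁ ⊔ W₂) ≤ Fintype.card n := by
      have := Submodule.finrank_le (W₁ ⊔ W₂)
      rwa [Module.finrank_pi] at this
    rw [← hW₁] at d₁
    rw [← hW₂] at d₂
    omega
  obtain ⟨x, hx, hx0⟩ := Submodule.exists_mem_ne_zero_of_ne_bot hinter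
  obtain ⟨hx1, hx2⟩ : x ∈ W₁ ∧ x ∈ W₂ := hx
  -- positive from the e-side
  have hCx : C *ᵥ x ≠ 0 := by
    intro h0
    apply hx0
    have : C⁻¹ *ᵥ (C *ᵥ x) = x := by
      rw [mulVec_mulVec, nonsing_inv_mul _ (isUnit_det_of_invertible C), one_mulVec]
    rw [h0, mulVec_zero] at this
    exact this.symm
  obtain ⟨j₀, hj₀⟩ : ∃ j, (C *ᵥ x) j ≠ 0 := by
    by_contra hc; push_neg at hc; exact hCx (funext hc)
  have hej₀ : 0 < e j₀ := by
    by_contra hc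
    exact hj₀ ((mem_coordKer).mp hx1 j₀ (by simpa using hc))
  have hpos : 0 < ∑ j, e j * Complex.normSq ((C *ᵥ x) j) := by
    apply Finset.sum_pos' _ ⟨j₀, Finset.mem_univ _, _⟩
    · intro j _
      by_cases hj : 0 < e j
      · exact mul_nonneg hj.le (Complex.normSq_nonneg _)
      · rw [(mem_coordKer).mp hx1 j (by simpa using hj)]
        simp
    · exact mul_pos hej₀ (Complex.normSq_pos.mpr hj₀)
  have hnonpos : ∑ j, f j * Complex.normSq ((D *ᵥ x) j) ≤ 0 := by
    apply Finset.sum_nonpos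
    intro j _
    by_cases hj : 0 < f j
    · rw [(mem_coordKer).mp hx2 j (by simp [hj])]
      simp
    · push_neg at hj
      exact mul_nonpos_of_nonpos_of_nonneg hj (Complex.normSq_nonneg _)
  rw [h x] at hpos
  exact absurd (lt_of_lt_of_le hpos hnonpos) (lt_irrefl 0)

lemma herm_rep {A : Matrix n n ℂ} (hA : A.IsHermitian) (x : n → ℂ) :
    star x ⬝ᵥ (A *ᵥ x) = ((∑ j, hA.eigenvalues j *
      Complex.normSq (((star (hA.eigenvectorUnitary : Matrix n n ℂ)) *ᵥ x) j) : ℝ) : ℂ) := by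
  set U := (hA.eigenvectorUnitary : Matrix n n ℂ) with hU
  set y := star U *ᵥ x with hy
  have hsy : star y = star x ᵥ* U := by
    rw [hy, star_mulVec, star_eq_conjTranspose, conjTranspose_conjTranspose]
  conv_lhs => rw [hA.spectral_theorem, Unitary.conjStarAlgAut_apply]
  rw [← hU, ← mulVec_mulVec, ← mulVec_mulVec, ← hy, dotProduct_mulVec, ← hsy]
  simp only [dotProduct, mulVec_diagonal, Pi.star_apply, Function.comp_apply]
  push_cast
  apply Finset.sum_congr rfl
  intro j _
  rw [← Complex.mul_conj, RCLike.star_def]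
  simp only [Complex.coe_algebraMap, RCLike.ofReal_alg, Complex.real_smul]
  ring

lemma count_partition (g : n → ℝ) :
    (univ.filter fun j => 0 < g j).card + (univ.filter fun j => g j < 0).card
      + (univ.filter fun j => g j = 0).card = Fintype.card n := by
  classical
  rw [Finset.card_filter, Finset.card_filter, Finset.card_filter, ← Finset.sum_add_distrib,
    ← Finset.sum_add_distrib, ← Finset.card_univ, Finset.card_eq_sum_ones]
  apply Finset.sum_congr rfl
  intro j _
  rcases lt_trichotomy 0 (g j) with h | h | h
  · simp [h, asymm h, h.ne']
  · simp [← h]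
  · simp [h, asymm h, h.ne]

lemma filter_neg_eq (g : n → ℝ) :
    (univ.filter fun j => 0 < -g j) = (univ.filter fun j => g j < 0) := by
  simp [neg_pos]

lemma filter_sum_card {α β : Type*} [Fintype α] [Fintype β] [DecidableEq α] [DecidableEq β]
    (P : α ⊕ β → Prop) [DecidablePred P] :
    (univ.filter P).card = (univ.filter fun a => P (Sum.inl a)).card
      + (univ.filter fun b => P (Sum.inr b)).card := by
  classical
  rw [Finset.card_filter, Finset.card_filter, Finset.card_filter, Fintype.sum_sum_type]

noncomputable def invertibleStarUnitary {A : Matrix n n ℂ} (hA : A.IsHermitian) :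
    Invertible (star (hA.eigenvectorUnitary : Matrix n n ℂ)) :=
  ⟨(hA.eigenvectorUnitary : Matrix n n ℂ),
    (Matrix.mem_unitaryGroup_iff).mp (hA.eigenvectorUnitary).2,
    Unitary.coe_star_mul_self hA.eigenvectorUnitary⟩

lemma count_eq {A : Matrix n n ℂ} (hA : A.IsHermitian) (e : n → ℝ) (C : Matrix n n ℂ)
    [Invertible C]
    (h : ∀ x, star x ⬝ᵥ (A *ᵥ x) = ((∑ j, e j * Complex.normSq ((C *ᵥ x) j) : ℝ) : ℂ)) :
    (univ.filter fun i => 0 < hA.eigenvalues i).card = (univ.filter fun j => 0 < e j).card ∧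
    (univ.filter fun i => hA.eigenvalues i < 0).card = (univ.filter fun j => e j < 0).card := by
  haveI := invertibleStarUnitary hA
  set U := star (hA.eigenvectorUnitary : Matrix n n ℂ) with hU
  have hsum : ∀ x : n → ℂ, ∑ j, hA.eigenvalues j * Complex.normSq ((U *ᵥ x) j)
      = ∑ j, e j * Complex.normSq ((C *ᵥ x) j) := fun x =>
    Complex.ofReal_injective ((herm_rep hA x).symm.trans (h x))
  constructor
  · exact le_antisymm (key_le _ _ U C hsum) (key_le _ _ C U fun x => (hsum x).symm)
  · have hneg : ∀ x : n → ℂ, ∑ j, (-hA.eigenvalues j) * Complex.normSq ((U *ᵥ x) j)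
        = ∑ j, (-e j) * Complex.normSq ((C *ᵥ x) j) := by
      intro x
      simp only [neg_mul, Finset.sum_neg_distrib]
      exact congrArg Neg.neg (hsum x)
    have := le_antisymm (key_le _ _ U C hneg) (key_le _ _ C U fun x => (hneg x).symm)
    rwa [filter_neg_eq, filter_neg_eq] at this

theorem stmt14' {p q : ℕ} (M11 : Matrix (Fin p) (Fin p) ℂ) (M12 : Matrix (Fin p) (Fin q) ℂ)
    (M22 : Matrix (Fin q) (Fin q) ℂ) [Invertible M22] (hM22 : M22.IsHermitian)
    (hM : (Matrix.fromBlocks M11 M12 M12ᴴ M22).IsHermitian)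
    (hS : (M11 - M12 * M22⁻¹ * M12ᴴ).IsHermitian) :
    (univ.filter fun i => 0 < hM.eigenvalues i).card
      = (univ.filter fun i => 0 < hM22.eigenvalues i).card
        + (univ.filter fun i => 0 < hS.eigenvalues i).card ∧
    (univ.filter fun i => hM.eigenvalues i < 0).card
      = (univ.filter fun i => hM22.eigenvalues i < 0).card
        + (univ.filter fun i => hS.eigenvalues i < 0).card := by
  classical
  set S := M11 - M12 * M22⁻¹ * M12ᴴ with hSdef
  set N := fromBlocks S (0 : Matrix (Fin p) (Fin q) ℂ) (0 : Matrix (Fin q) (Fin p) ℂ) M22 with hNdef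
  set X := fromBlocks (1 : Matrix (Fin p) (Fin p) ℂ) (0 : Matrix (Fin p) (Fin q) ℂ) (M22⁻¹ * M12ᴴ) (1 : Matrix (Fin q) (Fin q) ℂ) with hXdef
  have hinv : ⅟M22 = M22⁻¹ := invOf_eq_nonsing_inv M22
  have hXH : Xᴴ = fromBlocks (1 : Matrix (Fin p) (Fin p) ℂ) (M12 * M22⁻¹) 0 (1 : Matrix (Fin q) (Fin q) ℂ) := by
    rw [hXdef, fromBlocks_conjTranspose]
    simp [conjTranspose_nonsing_inv, hM22.eq]
  have hMX : fromBlocks M11 M12 M12ᴴ M22 = Xᴴ * N * X := by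
    rw [hXH, hXdef, hNdef, hSdef, ← hinv]
    exact fromBlocks_eq_of_invertible₂₂ M11 M12 M12ᴴ M22
  -- invertible pieces
  letI iUS := invertibleStarUnitary hS
  letI iU2 := invertibleStarUnitary hM22
  set US := star (hS.eigenvectorUnitary : Matrix (Fin p) (Fin p) ℂ) with hUS
  set U2 := star (hM22.eigenvectorUnitary : Matrix (Fin q) (Fin q) ℂ) with hU2
  set CN := fromBlocks US 0 0 U2 with hCN
  letI iCN : Invertible CN := fromBlocksZero₂₁Invertible US 0 U2
  letI i1p : Invertible (1 : Matrix (Fin p) (Fin p) ℂ) := invertibleOne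
  letI i1q : Invertible (1 : Matrix (Fin q) (Fin q) ℂ) := invertibleOne
  letI iX : Invertible X := fromBlocksZero₁₂Invertible 1 (M22⁻¹ * M12ᴴ) 1
  letI : Invertible (CN * X) := invertibleMul CN X
  set e : Fin p ⊕ Fin q → ℝ := Sum.elim hS.eigenvalues hM22.eigenvalues with he
  -- representation of N
  have repN : ∀ x : Fin p ⊕ Fin q → ℂ, star x ⬝ᵥ (N *ᵥ x)
      = ((∑ j, e j * Complex.normSq ((CN *ᵥ x) j) : ℝ) : ℂ) := by
    intro x
    have h1 : star x ⬝ᵥ (N *ᵥ x)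
        = star (x ∘ Sum.inl) ⬝ᵥ (S *ᵥ (x ∘ Sum.inl))
          + star (x ∘ Sum.inr) ⬝ᵥ (M22 *ᵥ (x ∘ Sum.inr)) := by
      rw [hNdef, fromBlocks_mulVec]
      simp [dotProduct, Fintype.sum_sum_type]
    rw [h1, herm_rep hS, herm_rep hM22, ← Complex.ofReal_add]
    congr 1
    rw [Fintype.sum_sum_type]
    congr 1 <;>
    · apply Finset.sum_congr rfl
      intro j _
      rw [hCN, fromBlocks_mulVec]
      simp [he, hUS, hU2]
  -- representation of M
  have repM : ∀ x : Fin p ⊕ Fin q → ℂ, star x ⬝ᵥ ((fromBlocks M11 M12 M12ᴴ M22) *ᵥ x)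
      = ((∑ j, e j * Complex.normSq (((CN * X) *ᵥ x) j) : ℝ) : ℂ) := by
    intro x
    rw [hMX, ← mulVec_mulVec, ← mulVec_mulVec, dotProduct_mulVec, ← star_mulVec, repN,
      mulVec_mulVec]
  obtain ⟨hpos, hneg⟩ := count_eq hM e (CN * X) repM
  have hsplit_pos := filter_sum_card (fun j => 0 < e j)
  have hsplit_neg := filter_sum_card (fun j => e j < 0)
  simp only [he, Sum.elim_inl, Sum.elim_inr] at hsplit_pos hsplit_neg
  constructor
  · rw [hpos, hsplit_pos]; omega
  · rw [hneg, hsplit_neg]; omega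

end Aux

/-- Haynsworth inertia additivity: for a Hermitian block matrix with
invertible block `M22`, the inertia of `M` is the inertia of `M22` plus the inertia of
the Schur complement `M11 - M12 M22⁻¹ M12ᴴ`. -/
theorem stmt14 {p q : ℕ} (M11 : Matrix (Fin p) (Fin p) ℂ) (M12 : Matrix (Fin p) (Fin q) ℂ)
    (M22 : Matrix (Fin q) (Fin q) ℂ) [Invertible M22] (hM22 : M22.IsHermitian)
    (hM : (Matrix.fromBlocks M11 M12 M12ᴴ M22).IsHermitian)
    (hS : (M11 - M12 * M22⁻¹ * M12ᴴ).IsHermitian) :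
    posCount hM = posCount hM22 + posCount hS ∧
    negCount hM = negCount hM22 + negCount hS ∧
    zeroCount hM = zeroCount hM22 + zeroCount hS := by
  classical
  obtain ⟨hp, hn⟩ := stmt14' M11 M12 M22 hM22 hM hS
  have t1 := count_partition hM.eigenvalues
  have t2 := count_partition hM22.eigenvalues
  have t3 := count_partition hS.eigenvalues
  simp only [Fintype.card_sum, Fintype.card_fin] at t1 t2 t3
  unfold posCount negCount zeroCount
  refine ⟨hp, hn, ?_⟩
  omega
end

section
/- For all k ≥ 5, NPO(k) > T_k = k(k+1)/2; that is, there exists a graph on binom(k+1,2) vertices whose adjacency matrix has at most k-1 nonpositive eigenvalues. -/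
open Matrix Finset Module

/-- `NPO k` : the least `n` such that every simple graph on at least `n` vertices has
at least `k` nonpositive adjacency eigenvalues (with multiplicity). -/
noncomputable def NPO (k : ℕ) : ℕ :=
  sInf {n | ∀ m, n ≤ m → ∀ G : SimpleGraph (Fin m), k ≤ nonposCount G}

variable {V : Type*} [Fintype V] [DecidableEq V] {A : Matrix V V ℝ}

lemma quad_eq_s18 (hA : A.IsHermitian) (x : V → ℝ) :
    x ⬝ᵥ (A *ᵥ x) = ∑ i, hA.eigenvalues i * (hA.eigenvectorBasis.repr (WithLp.toLp 2 x) i)^2 := by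
  set b := hA.eigenvectorBasis with hb
  have hx : ∑ i, b.repr (WithLp.toLp 2 x) i • (WithLp.equiv 2 _ (b i)) = x := by simpa using congrArg WithLp.ofLp (b.sum_repr (WithLp.toLp 2 x))
  have hdot : ∀ i, x ⬝ᵥ (WithLp.equiv 2 _ (b i)) = b.repr (WithLp.toLp 2 x) i := by
    intro i
    rw [b.repr_apply_apply, real_inner_comm]
    simp [EuclideanSpace.inner_eq_star_dotProduct, dotProduct_comm]
  have hAx : A *ᵥ x = ∑ i, (b.repr (WithLp.toLp 2 x) i * hA.eigenvalues i) • (WithLp.equiv 2 _ (b i)) := by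
    conv_lhs => rw [← hx, ← A.coe_mulVecLin]
    rw [map_sum]
    refine Finset.sum_congr rfl fun i _ => ?_
    rw [LinearMap.map_smul, A.coe_mulVecLin, WithLp.equiv_apply, hA.mulVec_eigenvectorBasis, smul_smul]
  rw [hAx]
  simp only [dotProduct, Finset.sum_apply, Pi.smul_apply, smul_eq_mul, Finset.mul_sum]
  rw [Finset.sum_comm]
  refine Finset.sum_congr rfl fun i _ => ?_
  have := hdot i
  simp only [dotProduct] at this
  calc ∑ j, x j * (b.repr (WithLp.toLp 2 x) i * hA.eigenvalues i * (WithLp.equiv 2 _ (b i)) j)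
      = (b.repr (WithLp.toLp 2 x) i * hA.eigenvalues i) * ∑ j, x j * (WithLp.equiv 2 _ (b i)) j := by
        rw [Finset.mul_sum]; exact Finset.sum_congr rfl fun j _ => by ring
    _ = hA.eigenvalues i * (b.repr (WithLp.toLp 2 x) i)^2 := by rw [this]; ring

lemma eig_rank_le_card (hA : A.IsHermitian) (S : Finset V) (W : Submodule ℝ (V → ℝ))
    (h : ∀ x ∈ W, (∀ i ∈ S, hA.eigenvectorBasis.repr (WithLp.toLp 2 x) i = 0) → x = 0) :
    finrank ℝ W ≤ S.card := by
  classical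
  set b := hA.eigenvectorBasis
  let L : (V → ℝ) →ₗ[ℝ] (S → ℝ) :=
    { toFun := fun x i => b.repr (WithLp.toLp 2 x) i
      map_add' := fun x y => by funext i; simp
      map_smul' := fun c x => by funext i; simp }
  have hinj : Function.Injective (L.comp W.subtype) := by
    rw [← LinearMap.ker_eq_bot, LinearMap.ker_eq_bot']
    rintro ⟨x, hx⟩ hLx
    have hv : ∀ i ∈ S, b.repr (WithLp.toLp 2 x) i = 0 := fun i hi => congrFun hLx ⟨i, hi⟩
    exact Subtype.ext (h x hx hv)
  calc finrank ℝ W ≤ finrank ℝ (S → ℝ) := LinearMap.finrank_le_finrank_of_injective hinj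
    _ = S.card := by rw [Module.finrank_pi]; exact Fintype.card_coe S

lemma count_nonpos_ge (hA : A.IsHermitian) (W : Submodule ℝ (V → ℝ))
    (hW : ∀ x ∈ W, x ⬝ᵥ (A *ᵥ x) ≤ 0) :
    finrank ℝ W ≤ (Finset.univ.filter fun i => hA.eigenvalues i ≤ 0).card := by
  classical
  apply eig_rank_le_card hA _ W
  intro x hx hv
  have hq := quad_eq_s18 hA x
  have hterm : ∀ i ∈ Finset.univ, (0:ℝ) ≤ hA.eigenvalues i * (hA.eigenvectorBasis.repr (WithLp.toLp 2 x) i)^2 := by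
    intro i _
    by_cases hi : hA.eigenvalues i ≤ 0
    · rw [hv i (Finset.mem_filter.2 ⟨Finset.mem_univ i, hi⟩)]; simp
    · exact mul_nonneg (le_of_lt (not_le.1 hi)) (sq_nonneg _)
  have hsum0 : ∑ i, hA.eigenvalues i * (hA.eigenvectorBasis.repr (WithLp.toLp 2 x) i)^2 = 0 :=
    le_antisymm (hq ▸ hW x hx) (Finset.sum_nonneg hterm)
  have hz : ∀ i, hA.eigenvectorBasis.repr (WithLp.toLp 2 x) i = 0 := by
    intro i
    by_cases hi : hA.eigenvalues i ≤ 0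
    · exact hv i (Finset.mem_filter.2 ⟨Finset.mem_univ i, hi⟩)
    · have := (Finset.sum_eq_zero_iff_of_nonneg hterm).1 hsum0 i (Finset.mem_univ i)
      have hpos := not_le.1 hi
      have hc2 : (hA.eigenvectorBasis.repr (WithLp.toLp 2 x) i)^2 = 0 :=
        (mul_eq_zero.1 this).resolve_left hpos.ne'
      exact pow_eq_zero_iff two_ne_zero |>.1 hc2
  have : hA.eigenvectorBasis.repr (WithLp.toLp 2 x) = 0 := by
    ext i; exact hz i
  simpa using hA.eigenvectorBasis.repr.map_eq_zero_iff.1 this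

lemma count_nonpos_le (hA : A.IsHermitian) (W : Submodule ℝ (V → ℝ))
    (hW : ∀ x ∈ W, x ≠ 0 → 0 < x ⬝ᵥ (A *ᵥ x)) :
    (Finset.univ.filter fun i => hA.eigenvalues i ≤ 0).card ≤ Fintype.card V - finrank ℝ W := by
  classical
  have hrk : finrank ℝ W ≤ (Finset.univ.filter fun i => ¬ hA.eigenvalues i ≤ 0).card := by
    apply eig_rank_le_card hA _ W
    intro x hx hv
    by_contra hx0
    have hq := hW x hx hx0
    rw [quad_eq_s18 hA x] at hq
    have : ∑ i, hA.eigenvalues i * (hA.eigenvectorBasis.repr (WithLp.toLp 2 x) i)^2 ≤ 0 := by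
      apply Finset.sum_nonpos
      intro i _
      by_cases hi : hA.eigenvalues i ≤ 0
      · exact mul_nonpos_of_nonpos_of_nonneg hi (sq_nonneg _)
      · rw [hv i (Finset.mem_filter.2 ⟨Finset.mem_univ i, hi⟩)]; simp
    linarith
  have hsplit := Finset.card_filter_add_card_filter_not
    (s := (Finset.univ : Finset V)) (p := fun i => hA.eigenvalues i ≤ 0)
  rw [Finset.card_univ] at hsplit
  omega

/-- functions supported in a set, as a submodule -/
def suppIn (s : Set V) : Submodule ℝ (V → ℝ) where
  carrier := {x | ∀ v, v ∉ s → x v = 0}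
  add_mem' := fun {a b} ha hb v hv => by simp [ha v hv, hb v hv]
  zero_mem' := fun v _ => rfl
  smul_mem' := fun c x hx v hv => by simp [hx v hv]


theorem indep_le_nonposCount (G : SimpleGraph V) {m : ℕ} (f : Fin m → V)
    (hf : Function.Injective f) (h : ∀ i j, i ≠ j → ¬ G.Adj (f i) (f j)) :
    m ≤ nonposCount G := by
  classical
  letI inst := Classical.decRel G.Adj
  unfold nonposCount
  set W := Submodule.span ℝ (Set.range fun i => (Pi.single (f i) (1:ℝ) : V → ℝ)) with hWdef
  have hli : LinearIndependent ℝ (fun i => (Pi.single (f i) (1:ℝ) : V → ℝ)) := by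
    have : (fun i => (Pi.single (f i) (1:ℝ) : V → ℝ)) = (⇑(Pi.basisFun ℝ V)) ∘ f := by
      funext i; rw [Function.comp_apply, Pi.basisFun_apply]
    rw [this]
    exact (Pi.basisFun ℝ V).linearIndependent.comp f hf
  have hrk : finrank ℝ W = m := by
    rw [hWdef, finrank_span_eq_card hli, Fintype.card_fin]
  have hsupp : W ≤ suppIn (Set.range f) := by
    rw [hWdef, Submodule.span_le]
    rintro _ ⟨i, rfl⟩ v hv
    exact Pi.single_eq_of_ne (fun hev => hv ⟨i, hev.symm⟩) 1
  have hq : ∀ x ∈ W, x ⬝ᵥ ((G.adjMatrix ℝ) *ᵥ x) ≤ 0 := by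
    intro x hx
    have hxs : ∀ v, v ∉ Set.range f → x v = 0 := hsupp hx
    have hzero : x ⬝ᵥ ((G.adjMatrix ℝ) *ᵥ x) = 0 := by
      unfold dotProduct mulVec dotProduct
      apply Finset.sum_eq_zero
      intro u _
      by_cases hu : x u = 0
      · rw [hu, zero_mul]
      · rw [mul_eq_zero]; right
        apply Finset.sum_eq_zero
        intro v _
        by_cases hv : x v = 0
        · rw [hv, mul_zero]
        · rw [mul_eq_zero]; left
          have hu' : u ∈ Set.range f := by by_contra hc; exact hu (hxs u hc)
          have hv' : v ∈ Set.range f := by by_contra hc; exact hv (hxs v hc)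
          obtain ⟨i, rfl⟩ := hu'
          obtain ⟨j, rfl⟩ := hv'
          simp only [SimpleGraph.adjMatrix_apply, ite_eq_right_iff]
          intro hadj
          exfalso
          by_cases hij : i = j
          · subst hij; exact G.loopless.irrefl _ hadj
          · exact h i j hij hadj
    rw [hzero]
  calc m = finrank ℝ W := hrk.symm
    _ ≤ _ := count_nonpos_ge (adjHerm G) W hq

theorem clique_le_nonposCount (G : SimpleGraph V) {m : ℕ} (f : Fin (m+1) → V)
    (hf : Function.Injective f) (h : ∀ i j, i ≠ j → G.Adj (f i) (f j)) :
    m ≤ nonposCount G := by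
  classical
  letI inst := Classical.decRel G.Adj
  unfold nonposCount
  set w : Fin m → (V → ℝ) :=
    fun i => (Pi.single (f i.castSucc) (1:ℝ) : V → ℝ) - Pi.single (f (Fin.last m)) 1 with hwdef
  have hcs_ne : ∀ i : Fin m, f i.castSucc ≠ f (Fin.last m) := by
    intro i he
    exact absurd (hf he) (Fin.ne_of_lt (Fin.castSucc_lt_last i))
  have hli : LinearIndependent ℝ w := by
    rw [Fintype.linearIndependent_iff]
    intro a ha i
    have := congrFun ha (f i.castSucc)
    simp only [Finset.sum_apply, Pi.smul_apply, Pi.sub_apply, hwdef, Pi.zero_apply,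
      smul_eq_mul] at this
    rw [Finset.sum_eq_single i] at this
    · simpa [Pi.single_eq_of_ne (hcs_ne i)] using this
    · intro j _ hji
      have h1 : f j.castSucc ≠ f i.castSucc := fun he =>
        hji (Fin.castSucc_injective m (hf he))
      simp only [Pi.single_eq_of_ne (Ne.symm h1), Pi.single_eq_of_ne (hcs_ne i), sub_zero,
        mul_zero, sub_self]
    · intro hi; exact absurd (Finset.mem_univ i) hi
  set W := Submodule.span ℝ (Set.range w) with hWdef
  have hrk : finrank ℝ W = m := by
    rw [hWdef, finrank_span_eq_card hli, Fintype.card_fin]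
  have hsupp : W ≤ suppIn (Set.range f) := by
    rw [hWdef, Submodule.span_le]
    rintro _ ⟨i, rfl⟩ v hv
    have h1 : f i.castSucc ≠ v := fun he => hv ⟨_, he⟩
    have h2 : f (Fin.last m) ≠ v := fun he => hv ⟨_, he⟩
    simp [hwdef, Pi.single_eq_of_ne (Ne.symm h1), Pi.single_eq_of_ne (Ne.symm h2)]
  have hsum : ∀ x ∈ W, ∑ v, x v = 0 := by
    have : W ≤ LinearMap.ker (∑ v : V, LinearMap.proj (R := ℝ) (φ := fun _ : V => ℝ) v) := by
      rw [hWdef, Submodule.span_le]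
      rintro _ ⟨i, rfl⟩
      simp only [SetLike.mem_coe, LinearMap.mem_ker, LinearMap.sum_apply, LinearMap.proj_apply]
      rw [hwdef]
      simp only [Pi.sub_apply]
      rw [Finset.sum_sub_distrib, sum_pi_single', sum_pi_single']
      simp
    intro x hx
    have := this hx
    simpa only [LinearMap.mem_ker, LinearMap.sum_apply, LinearMap.proj_apply] using this
  have hq : ∀ x ∈ W, x ⬝ᵥ ((G.adjMatrix ℝ) *ᵥ x) ≤ 0 := by
    intro x hx
    have hxs : ∀ v, v ∉ Set.range f → x v = 0 := hsupp hx
    have hkey : x ⬝ᵥ ((G.adjMatrix ℝ) *ᵥ x) = (∑ v, x v)^2 - ∑ v, (x v)^2 := by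
      unfold dotProduct mulVec dotProduct
      have hterm : ∀ u v : V, x u * ((G.adjMatrix ℝ) u v * x v)
          = x u * x v - (if u = v then x u * x v else 0) := by
        intro u v
        by_cases hu : x u = 0
        · simp [hu]
        by_cases hv : x v = 0
        · simp [hv]
        have hu' : u ∈ Set.range f := by by_contra hc; exact hu (hxs u hc)
        have hv' : v ∈ Set.range f := by by_contra hc; exact hv (hxs v hc)
        obtain ⟨i, rfl⟩ := hu'
        obtain ⟨j, rfl⟩ := hv'
        by_cases hij : i = j
        · subst hij; simp
        · have hne : f i ≠ f j := fun he => hij (hf he)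
          rw [if_neg hne]
          simp [SimpleGraph.adjMatrix_apply, h i j hij]
      calc ∑ u, x u * ∑ v, (G.adjMatrix ℝ) u v * x v
          = ∑ u, ∑ v, x u * ((G.adjMatrix ℝ) u v * x v) := by
            exact Finset.sum_congr rfl fun u _ => Finset.mul_sum _ _ _
        _ = ∑ u, ∑ v, (x u * x v - (if u = v then x u * x v else 0)) := by
            exact Finset.sum_congr rfl fun u _ => Finset.sum_congr rfl fun v _ => hterm u v
        _ = (∑ u, ∑ v, x u * x v) - ∑ u, ∑ v, (if u = v then x u * x v else 0) := by
            rw [← Finset.sum_sub_distrib]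
            exact Finset.sum_congr rfl fun u _ => Finset.sum_sub_distrib _ _
        _ = (∑ v, x v)^2 - ∑ v, (x v)^2 := by
            congr 1
            · rw [sq, Finset.sum_mul_sum]
            · exact Finset.sum_congr rfl fun u _ => by
                rw [Finset.sum_ite_eq Finset.univ u (fun v => x u * x v)]
                simp [sq]
    rw [hkey, hsum x hx]
    simp only [ne_eq, OfNat.ofNat_ne_zero, not_false_eq_true, zero_pow, zero_sub,
      neg_nonpos]
    exact Finset.sum_nonneg fun v _ => sq_nonneg _
  calc m = finrank ℝ W := hrk.symm
    _ ≤ _ := count_nonpos_ge (adjHerm G) W hq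

theorem ramsey_aux_s18 (G : SimpleGraph V) : ∀ (n s t : ℕ) (A : Finset V), s + t ≤ n →
    (s + t).choose s ≤ A.card →
    (∃ f : Fin s → V, Function.Injective f ∧ (∀ i, f i ∈ A) ∧
      ∀ i j, i ≠ j → G.Adj (f i) (f j)) ∨
    (∃ f : Fin t → V, Function.Injective f ∧ (∀ i, f i ∈ A) ∧
      ∀ i j, i ≠ j → ¬ G.Adj (f i) (f j)) := by
  classical
  intro n
  induction n with
  | zero =>
    intro s t A hst _
    obtain rfl : s = 0 := by omega
    exact Or.inl ⟨Fin.elim0, fun i => i.elim0, fun i => i.elim0, fun i => i.elim0⟩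
  | succ n IH =>
    intro s t A hst hcard
    match s, t with
    | 0, t => exact Or.inl ⟨Fin.elim0, fun i => i.elim0, fun i => i.elim0, fun i => i.elim0⟩
    | s+1, 0 => exact Or.inr ⟨Fin.elim0, fun i => i.elim0, fun i => i.elim0, fun i => i.elim0⟩
    | s+1, t+1 =>
      have hA : A.Nonempty := by
        rw [← Finset.card_pos]
        calc 0 < (s + 1 + (t + 1)).choose (s + 1) :=
          Nat.choose_pos (by omega)
        _ ≤ A.card := hcard
      obtain ⟨v, hv⟩ := hA
      set B := A.filter (fun u => G.Adj v u) with hB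
      set C := A.filter (fun u => u ≠ v ∧ ¬ G.Adj v u) with hC
      have hcover : A ⊆ B ∪ C ∪ {v} := by
        intro u hu
        simp only [Finset.mem_union, Finset.mem_filter, Finset.mem_singleton, hB, hC]
        by_cases huv : u = v
        · exact Or.inr huv
        · by_cases hadj : G.Adj v u
          · exact Or.inl (Or.inl ⟨hu, hadj⟩)
          · exact Or.inl (Or.inr ⟨hu, huv, hadj⟩)
      have hcardsum : A.card ≤ B.card + C.card + 1 := by
        calc A.card ≤ (B ∪ C ∪ {v}).card := Finset.card_le_card hcover
          _ ≤ (B ∪ C).card + ({v} : Finset V).card := Finset.card_union_le _ _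
          _ ≤ B.card + C.card + 1 := by
            have := Finset.card_union_le B C
            simp only [Finset.card_singleton]
            omega
      have hpascal : (s + 1 + (t + 1)).choose (s + 1)
          = (s + (t + 1)).choose s + (s + 1 + t).choose (s + 1) := by
        have h1 : s + 1 + (t + 1) = (s + (t+1)) + 1 := by omega
        rw [h1, Nat.choose_succ_succ]
        congr 2
        omega
      have hBC : (s + (t + 1)).choose s ≤ B.card ∨ (s + 1 + t).choose (s + 1) ≤ C.card := by
        by_contra hcon
        push_neg at hcon
        omega
      rcases hBC with hBig | hBig
      · rcases IH s (t + 1) B (by omega) hBig with ⟨f, hfi, hfA, hfadj⟩ | ⟨f, hfi, hfA, hfadj⟩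
        · refine Or.inl ⟨Fin.cons v f, ?_, ?_, ?_⟩
          · rw [Fin.cons_injective_iff]
            refine ⟨?_, hfi⟩
            rintro ⟨i, hi⟩
            have := Finset.mem_filter.1 (hfA i) |>.2
            rw [hi] at this
            exact G.loopless.irrefl v this
          · intro i
            induction i using Fin.cases with
            | zero => exact hv
            | succ j => exact Finset.mem_filter.1 (hfA j) |>.1
          · intro i j hij
            induction i using Fin.cases with
            | zero =>
              induction j using Fin.cases with
              | zero => exact absurd rfl hij
              | succ j' => simpa using Finset.mem_filter.1 (hfA j') |>.2
            | succ i' =>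
              induction j using Fin.cases with
              | zero => simpa using (Finset.mem_filter.1 (hfA i') |>.2).symm
              | succ j' =>
                have hij2 : i' ≠ j' := fun he => hij (by rw [he])
                simpa using hfadj i' j' hij2
        · exact Or.inr ⟨f, hfi, fun i => Finset.mem_filter.1 (hfA i) |>.1, hfadj⟩
      · rcases IH (s + 1) t C (by omega) hBig with ⟨f, hfi, hfA, hfadj⟩ | ⟨f, hfi, hfA, hfadj⟩
        · exact Or.inl ⟨f, hfi, fun i => Finset.mem_filter.1 (hfA i) |>.1, hfadj⟩
        · refine Or.inr ⟨Fin.cons v f, ?_, ?_, ?_⟩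
          · rw [Fin.cons_injective_iff]
            refine ⟨?_, hfi⟩
            rintro ⟨i, hi⟩
            exact (Finset.mem_filter.1 (hfA i) |>.2.1) hi
          · intro i
            induction i using Fin.cases with
            | zero => exact hv
            | succ j => exact Finset.mem_filter.1 (hfA j) |>.1
          · intro i j hij
            induction i using Fin.cases with
            | zero =>
              induction j using Fin.cases with
              | zero => exact absurd rfl hij
              | succ j' => simpa using Finset.mem_filter.1 (hfA j') |>.2.2
            | succ i' =>
              induction j using Fin.cases with
              | zero =>
                have := Finset.mem_filter.1 (hfA i') |>.2.2
                simpa using fun hadj => this hadj.symm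
              | succ j' =>
                have hij2 : i' ≠ j' := fun he => hij (by rw [he])
                simpa using hfadj i' j' hij2

section Witness
variable {k : ℕ}

abbrev Pairs (k : ℕ) := {s : Finset (Fin k) // s.card = 2}

def WG (k : ℕ) : SimpleGraph (Fin k ⊕ Pairs k) where
  Adj u v := match u, v with
    | .inl i, .inl j => i ≠ j
    | .inl i, .inr p => i ∈ p.1
    | .inr p, .inl i => i ∈ p.1
    | .inr p, .inr q => Disjoint p.1 q.1
  symm := by
    constructor
    rintro (i | p) (j | q) h
    · exact Ne.symm h
    · exact h
    · exact h
    · exact Disjoint.symm h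
  loopless := by
    constructor
    rintro (i | p) h
    · exact h rfl
    · have h0 := Finset.disjoint_self_iff_empty _ |>.1 h
      have := p.2
      rw [h0] at this
      simp at this

/-- the "degree sum" of y at a vertex i -/
def Si (y : Pairs k → ℝ) (i : Fin k) : ℝ := ∑ p : Pairs k, if i ∈ p.1 then y p else 0

lemma card_inter_eq (p q : Pairs k) :
    (p.1 ∩ q.1).card = if p = q then 2 else if Disjoint p.1 q.1 then 0 else 1 := by
  by_cases hpq : p = q
  · subst hpq; simp [p.2]
  · rw [if_neg hpq]
    by_cases hd : Disjoint p.1 q.1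
    · simp [Finset.disjoint_iff_inter_eq_empty.1 hd, hd]
    · rw [if_neg hd]
      have hle : (p.1 ∩ q.1).card ≤ 2 := le_trans (Finset.card_le_card inter_subset_left) p.2.le
      have hne : (p.1 ∩ q.1).card ≠ 0 := by
        intro h0
        exact hd (Finset.disjoint_iff_inter_eq_empty.2 (Finset.card_eq_zero.1 h0))
      have h2 : (p.1 ∩ q.1).card ≠ 2 := by
        intro h2
        have hsub : p.1 ∩ q.1 = p.1 :=
          Finset.eq_of_subset_of_card_le inter_subset_left (by rw [h2, p.2])
        have hsub2 : p.1 ∩ q.1 = q.1 :=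
          Finset.eq_of_subset_of_card_le inter_subset_right (by rw [h2, q.2])
        exact hpq (Subtype.ext (hsub.symm.trans hsub2))
      omega

lemma C1 (y : Pairs k → ℝ) :
    ∑ i, (Si y i)^2 = ∑ p, ∑ q, ((p.1 ∩ q.1).card : ℝ) * (y p * y q) := by
  have hcard : ∀ p q : Pairs k, ((p.1 ∩ q.1).card : ℝ)
      = ∑ i : Fin k, if i ∈ p.1 ∧ i ∈ q.1 then (1:ℝ) else 0 := by
    intro p q
    rw [Finset.sum_boole]
    congr 1
    rw [Finset.filter_and, Finset.filter_mem_eq_inter, Finset.filter_mem_eq_inter]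
    simp
  calc ∑ i, (Si y i)^2
      = ∑ i, (∑ p, if i ∈ p.1 then y p else 0) * (∑ q, if i ∈ q.1 then y q else 0) := by
        simp [Si, sq]
    _ = ∑ i : Fin k, ∑ p, ∑ q, (if i ∈ p.1 ∧ i ∈ q.1 then (1:ℝ) else 0) * (y p * y q) := by
        refine Finset.sum_congr rfl fun i _ => ?_
        rw [Finset.sum_mul_sum]
        refine Finset.sum_congr rfl fun p _ => Finset.sum_congr rfl fun q _ => ?_
        by_cases hp : i ∈ p.1 <;> by_cases hq : i ∈ q.1 <;> simp [hp, hq]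
    _ = ∑ p, ∑ q, ∑ i : Fin k, (if i ∈ p.1 ∧ i ∈ q.1 then (1:ℝ) else 0) * (y p * y q) := by
        rw [Finset.sum_comm]
        refine Finset.sum_congr rfl fun p _ => Finset.sum_comm
    _ = ∑ p, ∑ q, ((p.1 ∩ q.1).card : ℝ) * (y p * y q) := by
        refine Finset.sum_congr rfl fun p _ => Finset.sum_congr rfl fun q _ => ?_
        rw [← Finset.sum_mul, ← hcard]

lemma C3 (y : Pairs k → ℝ) : ∑ i, Si y i = 2 * ∑ p, y p := by
  unfold Si
  rw [Finset.sum_comm]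
  have : ∀ p : Pairs k, ∑ i : Fin k, (if i ∈ p.1 then y p else 0) = 2 * y p := by
    intro p
    rw [Finset.sum_ite_mem, Finset.univ_inter, Finset.sum_const, p.2]
    ring_nf
  rw [Finset.sum_congr rfl fun p _ => this p, Finset.mul_sum]

/-- the linear parametrization of the positive subspace -/
def Phi (k : ℕ) : ((Pairs k → ℝ) × ℝ) →ₗ[ℝ] ((Fin k ⊕ Pairs k) → ℝ) where
  toFun yt := Sum.elim (fun i => Si yt.1 i + yt.2) (fun p => yt.1 p)
  map_add' yt zt := by
    funext u
    rcases u with i | p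
    · simp only [Sum.elim_inl, Pi.add_apply, Si, Prod.fst_add, Prod.snd_add]
      have : ∀ p : Pairs k, (if i ∈ p.1 then yt.1 p + zt.1 p else 0)
          = (if i ∈ p.1 then yt.1 p else 0) + (if i ∈ p.1 then zt.1 p else 0) := by
        intro p; by_cases h : i ∈ p.1 <;> simp [h]
      rw [show (∑ x : Pairs k, if i ∈ x.1 then yt.1 x + zt.1 x else 0)
          = ∑ x : Pairs k, ((if i ∈ x.1 then yt.1 x else 0) + (if i ∈ x.1 then zt.1 x else 0))
          from Finset.sum_congr rfl fun p _ => this p, Finset.sum_add_distrib]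
      ring
    · simp
  map_smul' c yt := by
    funext u
    rcases u with i | p
    · simp only [Sum.elim_inl, Pi.smul_apply, Si, Prod.smul_fst, Prod.smul_snd, smul_eq_mul,
        RingHom.id_apply]
      have : ∀ p : Pairs k, (if i ∈ p.1 then c * yt.1 p else 0)
          = c * (if i ∈ p.1 then yt.1 p else 0) := by
        intro p; by_cases h : i ∈ p.1 <;> simp [h]
      rw [show (∑ x : Pairs k, if i ∈ x.1 then c * yt.1 x else 0)
          = ∑ x : Pairs k, c * (if i ∈ x.1 then yt.1 x else 0)
          from Finset.sum_congr rfl fun p _ => this p, ← Finset.mul_sum]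
      ring
    · simp

lemma Phi_injective (k : ℕ) (hk : 0 < k) : Function.Injective (Phi k) := by
  rw [← LinearMap.ker_eq_bot, LinearMap.ker_eq_bot']
  rintro ⟨y, t⟩ h
  have hy : y = 0 := by
    funext p
    exact congrFun h (Sum.inr p)
  subst hy
  have hS : ∀ i, Si (0 : Pairs k → ℝ) i = 0 := by
    intro i; unfold Si; simp
  have := congrFun h (Sum.inl ⟨0, hk⟩)
  simp only [Phi, LinearMap.coe_mk, AddHom.coe_mk, Sum.elim_inl, hS, zero_add,
    Pi.zero_apply] at this
  simp [Prod.ext_iff, this]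

lemma helper1 {ι : Type*} [Fintype ι] [DecidableEq ι] (x : ι → ℝ) :
    ∑ i, ∑ j, x i * ((if i = j then (0:ℝ) else 1) * x j)
      = (∑ i, x i)^2 - ∑ i, (x i)^2 := by
  have hterm : ∀ i j : ι, x i * ((if i = j then (0:ℝ) else 1) * x j)
      = x i * x j - (if i = j then x i * x j else 0) := by
    intro i j; by_cases h : i = j <;> simp [h]
  calc ∑ i, ∑ j, x i * ((if i = j then (0:ℝ) else 1) * x j)
      = ∑ i, ∑ j, (x i * x j - (if i = j then x i * x j else 0)) := by
        exact Finset.sum_congr rfl fun i _ => Finset.sum_congr rfl fun j _ => hterm i j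
    _ = (∑ i, ∑ j, x i * x j) - ∑ i, ∑ j, (if i = j then x i * x j else 0) := by
        rw [← Finset.sum_sub_distrib]
        exact Finset.sum_congr rfl fun i _ => Finset.sum_sub_distrib _ _
    _ = (∑ i, x i)^2 - ∑ i, (x i)^2 := by
        congr 1
        · rw [sq, Finset.sum_mul_sum]
        · exact Finset.sum_congr rfl fun i _ => by
            rw [Finset.sum_ite_eq Finset.univ i (fun j => x i * x j)]
            simp [sq]

lemma quad_Phi (k : ℕ) [inst : DecidableRel (WG k).Adj] (y : Pairs k → ℝ) (t : ℝ) :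
    (Phi k (y, t)) ⬝ᵥ (((WG k).adjMatrix ℝ) *ᵥ (Phi k (y, t)))
      = 5*(∑ p, y p)^2 + 4*k*(∑ p, y p)*t + ((k:ℝ)^2 - k)*t^2 + ∑ p, (y p)^2 := by
  classical
  set x := Phi k (y, t) with hxdef
  set xl : Fin k → ℝ := fun i => Si y i + t with hxl
  set A := (WG k).adjMatrix ℝ with hA
  have hxli : ∀ i, x (Sum.inl i) = xl i := fun i => by simp [hxdef, Phi, hxl]
  have hxri : ∀ p, x (Sum.inr p) = y p := fun p => by simp [hxdef, Phi]
  have hA1 : ∀ i j, A (Sum.inl i) (Sum.inl j) = if i = j then (0:ℝ) else 1 := by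
    intro i j
    have : (WG k).Adj (Sum.inl i) (Sum.inl j) ↔ i ≠ j := Iff.rfl
    rw [hA, SimpleGraph.adjMatrix_apply]
    by_cases h : i = j <;> simp [this, h]
  have hA2 : ∀ i p, A (Sum.inl i) (Sum.inr p) = if i ∈ p.1 then (1:ℝ) else 0 := by
    intro i p
    have : (WG k).Adj (Sum.inl i) (Sum.inr p) ↔ i ∈ p.1 := Iff.rfl
    rw [hA, SimpleGraph.adjMatrix_apply]
    by_cases h : i ∈ p.1 <;> simp [this, h]
  have hA3 : ∀ i p, A (Sum.inr p) (Sum.inl i) = if i ∈ p.1 then (1:ℝ) else 0 := by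
    intro i p
    have : (WG k).Adj (Sum.inr p) (Sum.inl i) ↔ i ∈ p.1 := Iff.rfl
    rw [hA, SimpleGraph.adjMatrix_apply]
    by_cases h : i ∈ p.1 <;> simp [this, h]
  have hA4 : ∀ p q, A (Sum.inr p) (Sum.inr q) = if Disjoint p.1 q.1 then (1:ℝ) else 0 := by
    intro p q
    have : (WG k).Adj (Sum.inr p) (Sum.inr q) ↔ Disjoint p.1 q.1 := Iff.rfl
    rw [hA, SimpleGraph.adjMatrix_apply]
    by_cases h : Disjoint p.1 q.1 <;> simp [this, h]
  have hq : x ⬝ᵥ (A *ᵥ x)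
      = (∑ i, ∑ j, xl i * ((if i = j then (0:ℝ) else 1) * xl j))
        + (∑ i, ∑ p, xl i * ((if i ∈ p.1 then (1:ℝ) else 0) * y p))
        + ((∑ p, ∑ i, y p * ((if i ∈ p.1 then (1:ℝ) else 0) * xl i))
        + (∑ p, ∑ q, y p * ((if Disjoint p.1 q.1 then (1:ℝ) else 0) * y q))) := by
    have expand : x ⬝ᵥ (A *ᵥ x) = ∑ u, x u * ∑ v, A u v * x v := rfl
    rw [expand]
    simp only [Fintype.sum_sum_type]
    congr 1
    · calc ∑ i : Fin k, x (Sum.inl i) * ((∑ j, A (Sum.inl i) (Sum.inl j) * x (Sum.inl j))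
              + ∑ p, A (Sum.inl i) (Sum.inr p) * x (Sum.inr p))
          = ∑ i, ((∑ j, xl i * ((if i = j then (0:ℝ) else 1) * xl j))
              + ∑ p, xl i * ((if i ∈ p.1 then (1:ℝ) else 0) * y p)) := by
            refine Finset.sum_congr rfl fun i _ => ?_
            rw [hxli, mul_add, Finset.mul_sum, Finset.mul_sum]
            congr 1
            · exact Finset.sum_congr rfl fun j _ => by rw [hA1, hxli]
            · exact Finset.sum_congr rfl fun p _ => by rw [hA2, hxri]
        _ = _ := Finset.sum_add_distrib
    · calc ∑ p : Pairs k, x (Sum.inr p) * ((∑ i, A (Sum.inr p) (Sum.inl i) * x (Sum.inl i))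
              + ∑ q, A (Sum.inr p) (Sum.inr q) * x (Sum.inr q))
          = ∑ p, ((∑ i, y p * ((if i ∈ p.1 then (1:ℝ) else 0) * xl i))
              + ∑ q, y p * ((if Disjoint p.1 q.1 then (1:ℝ) else 0) * y q)) := by
            refine Finset.sum_congr rfl fun p _ => ?_
            rw [hxri, mul_add, Finset.mul_sum, Finset.mul_sum]
            congr 1
            · exact Finset.sum_congr rfl fun i _ => by rw [hA3, hxli]
            · exact Finset.sum_congr rfl fun q _ => by rw [hA4, hxri]
        _ = _ := Finset.sum_add_distrib
  rw [hq]
  -- the four blocks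
  have hTLL : ∑ i, ∑ j, xl i * ((if i = j then (0:ℝ) else 1) * xl j)
      = (∑ i, xl i)^2 - ∑ i, (xl i)^2 := helper1 xl
  have hTLR : ∑ i, ∑ p, xl i * ((if i ∈ p.1 then (1:ℝ) else 0) * y p)
      = ∑ i, xl i * Si y i := by
    refine Finset.sum_congr rfl fun i _ => ?_
    rw [Si, Finset.mul_sum]
    refine Finset.sum_congr rfl fun p _ => ?_
    by_cases h : i ∈ p.1 <;> simp [h]
  have hTRL : ∑ p, ∑ i, y p * ((if i ∈ p.1 then (1:ℝ) else 0) * xl i)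
      = ∑ i, xl i * Si y i := by
    rw [Finset.sum_comm]
    refine Finset.sum_congr rfl fun i _ => ?_
    rw [Si, Finset.mul_sum]
    refine Finset.sum_congr rfl fun p _ => ?_
    by_cases h : i ∈ p.1 <;> simp [h] <;> ring
  have hTRR : ∑ p, ∑ q, y p * ((if Disjoint p.1 q.1 then (1:ℝ) else 0) * y q)
      = (∑ p, y p)^2 - ∑ i, (Si y i)^2 + ∑ p, (y p)^2 := by
    have hterm : ∀ p q : Pairs k, y p * ((if Disjoint p.1 q.1 then (1:ℝ) else 0) * y q)
        = y p * y q - ((p.1 ∩ q.1).card : ℝ) * (y p * y q)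
          + (if p = q then y p * y q else 0) := by
      intro p q
      rw [card_inter_eq]
      by_cases hpq : p = q
      · subst hpq
        have hnd : ¬ Disjoint p.1 p.1 := by
          intro hd
          have h0 := Finset.disjoint_self_iff_empty _ |>.1 hd
          have := p.2
          rw [h0] at this
          simp at this
        have hne0 : p.1 ≠ ∅ := by
          intro h0
          have h2 := p.2
          rw [h0] at h2
          simp at h2
        simp [hnd, hne0]
        ring
      · by_cases hd : Disjoint p.1 q.1 <;> simp [hpq, hd] <;> ring
    calc ∑ p, ∑ q, y p * ((if Disjoint p.1 q.1 then (1:ℝ) else 0) * y q)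
        = ∑ p, ∑ q, (y p * y q - ((p.1 ∩ q.1).card : ℝ) * (y p * y q)
            + (if p = q then y p * y q else 0)) :=
          Finset.sum_congr rfl fun p _ => Finset.sum_congr rfl fun q _ => hterm p q
      _ = ((∑ p, ∑ q, y p * y q) - ∑ p, ∑ q, ((p.1 ∩ q.1).card : ℝ) * (y p * y q))
            + ∑ p, ∑ q, (if p = q then y p * y q else 0) := by
          rw [← Finset.sum_sub_distrib, ← Finset.sum_add_distrib]
          refine Finset.sum_congr rfl fun p _ => ?_
          rw [← Finset.sum_sub_distrib, ← Finset.sum_add_distrib]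
      _ = (∑ p, y p)^2 - ∑ i, (Si y i)^2 + ∑ p, (y p)^2 := by
          rw [← C1 y, sq, Finset.sum_mul_sum]
          congr 1
          refine Finset.sum_congr rfl fun p _ => ?_
          rw [Finset.sum_ite_eq Finset.univ p (fun q => y p * y q)]
          simp [sq]
  rw [hTLL, hTLR, hTRL, hTRR]
  -- scalar bookkeeping
  have hSk : ∑ i : Fin k, Si y i = 2 * ∑ p, y p := C3 y
  have hX : ∑ i, xl i = 2 * (∑ p, y p) + k * t := by
    rw [hxl]
    rw [Finset.sum_add_distrib, hSk, Finset.sum_const, Finset.card_univ, Fintype.card_fin,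
      nsmul_eq_mul]
  have hQ : ∑ i, (xl i)^2
      = (∑ i, (Si y i)^2) + 4 * (∑ p, y p) * t + k * t^2 := by
    rw [hxl]
    have : ∀ i : Fin k, (Si y i + t)^2 = (Si y i)^2 + 2 * t * Si y i + t^2 := fun i => by ring
    rw [Finset.sum_congr rfl fun i _ => this i, Finset.sum_add_distrib,
      Finset.sum_add_distrib, ← Finset.mul_sum, hSk, Finset.sum_const, Finset.card_univ,
      Fintype.card_fin, nsmul_eq_mul]
    ring
  have hM : ∑ i, xl i * Si y i = (∑ i, (Si y i)^2) + 2 * (∑ p, y p) * t := by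
    rw [hxl]
    have : ∀ i : Fin k, (Si y i + t) * Si y i = (Si y i)^2 + t * Si y i := fun i => by ring
    rw [Finset.sum_congr rfl fun i _ => this i, Finset.sum_add_distrib, ← Finset.mul_sum, hSk]
    ring
  rw [hX, hQ, hM]
  ring

end Witness

lemma Phi_quad_pos (k : ℕ) (hk : 5 ≤ k) [inst : DecidableRel (WG k).Adj]
    (y : Pairs k → ℝ) (t : ℝ) (hx0 : Phi k (y, t) ≠ 0) :
    0 < (Phi k (y, t)) ⬝ᵥ (((WG k).adjMatrix ℝ) *ᵥ (Phi k (y, t))) := by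
  rw [quad_Phi]
  have hyt : ¬(y = 0 ∧ t = 0) := by
    rintro ⟨rfl, rfl⟩
    exact hx0 (map_zero (Phi k))
  have hk5 : (5:ℝ) ≤ (k:ℝ) := by exact_mod_cast hk
  by_cases hy : y = 0
  · have ht : t ≠ 0 := fun h => hyt ⟨hy, h⟩
    subst hy
    have hpos2 : 0 < ((k:ℝ)^2 - k) * t^2 := mul_pos (by nlinarith) (by positivity)
    simpa using hpos2
  · obtain ⟨p0, hp0⟩ := Function.ne_iff.1 hy
    have h1 : 0 < ∑ p, (y p)^2 := by
      apply Finset.sum_pos'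
      · intro p _; positivity
      · exact ⟨p0, Finset.mem_univ p0,
          lt_of_le_of_ne (sq_nonneg _) (Ne.symm (pow_ne_zero 2 hp0))⟩
    have h3 : 0 ≤ ((k:ℝ) - 5) * k * t^2 :=
      mul_nonneg (mul_nonneg (by linarith) (by positivity)) (sq_nonneg t)
    have h2 : 0 ≤ 5*(∑ p, y p)^2 + 4*k*(∑ p, y p)*t + ((k:ℝ)^2 - k)*t^2 := by
      nlinarith [sq_nonneg (5*(∑ p, y p) + 2*(k:ℝ)*t), h3]
    linarith

theorem witnessFin (k : ℕ) (hk : 5 ≤ k) :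
    ∃ G : SimpleGraph (Fin ((k + 1).choose 2)), nonposCount G ≤ k - 1 := by
  classical
  have hchoose : (k + 1).choose 2 = k + k.choose 2 := by
    rw [Nat.choose_succ_succ, Nat.choose_one_right]
  have hcard : Fintype.card (Fin k ⊕ Pairs k) = Fintype.card (Fin ((k + 1).choose 2)) := by
    rw [Fintype.card_sum, Fintype.card_fin, Fintype.card_finset_len, Fintype.card_fin,
      Fintype.card_fin, hchoose]
  set e : Fin ((k + 1).choose 2) ≃ (Fin k ⊕ Pairs k) := Fintype.equivOfCardEq hcard.symm with he
  refine ⟨(WG k).comap ⇑e, ?_⟩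
  letI inst : DecidableRel ((WG k).comap ⇑e).Adj := Classical.decRel _
  letI instW : DecidableRel (WG k).Adj := Classical.decRel _
  unfold nonposCount
  set L := (LinearMap.funLeft ℝ ℝ ⇑e) ∘ₗ (Phi k) with hL
  set W := LinearMap.range L with hW
  have hLinj : Function.Injective L := by
    rw [hL, LinearMap.coe_comp]
    exact (LinearMap.funLeft_injective_of_surjective ℝ ℝ ⇑e e.surjective).comp
      (Phi_injective k (by omega))
  have hrk : finrank ℝ W = k.choose 2 + 1 := by
    rw [hW, LinearMap.finrank_range_of_inj hLinj]
    rw [Module.finrank_prod, Module.finrank_pi, Module.finrank_self]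
    congr 1
    rw [Fintype.card_finset_len, Fintype.card_fin]
  have hquad : ∀ x : (Fin k ⊕ Pairs k) → ℝ,
      (x ∘ ⇑e) ⬝ᵥ ((((WG k).comap ⇑e).adjMatrix ℝ) *ᵥ (x ∘ ⇑e))
        = x ⬝ᵥ (((WG k).adjMatrix ℝ) *ᵥ x) := by
    intro x
    have expand1 : (x ∘ ⇑e) ⬝ᵥ ((((WG k).comap ⇑e).adjMatrix ℝ) *ᵥ (x ∘ ⇑e))
        = ∑ u, x (e u) * ∑ v, (((WG k).comap ⇑e).adjMatrix ℝ) u v * x (e v) := rfl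
    have expand2 : x ⬝ᵥ (((WG k).adjMatrix ℝ) *ᵥ x)
        = ∑ u, x u * ∑ v, ((WG k).adjMatrix ℝ) u v * x v := rfl
    rw [expand1, expand2]
    rw [← Equiv.sum_comp e (fun u => x u * ∑ v, ((WG k).adjMatrix ℝ) u v * x v)]
    refine Finset.sum_congr rfl fun u _ => ?_
    congr 1
    rw [← Equiv.sum_comp e (fun v => ((WG k).adjMatrix ℝ) (e u) v * x v)]
    refine Finset.sum_congr rfl fun v _ => ?_
    congr 1
  have hpos : ∀ x ∈ W, x ≠ 0 → 0 < x ⬝ᵥ ((((WG k).comap ⇑e).adjMatrix ℝ) *ᵥ x) := by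
    rintro x ⟨⟨y, t⟩, rfl⟩ hx0
    have hx : L (y, t) = (Phi k (y, t)) ∘ ⇑e := rfl
    rw [hx, hquad]
    apply Phi_quad_pos k hk y t
    intro h0
    apply hx0
    rw [hx, h0]
    rfl
  have hcount := count_nonpos_le (adjHerm ((WG k).comap ⇑e)) W hpos
  rw [hrk, Fintype.card_fin] at hcount
  calc _ ≤ (k + 1).choose 2 - (k.choose 2 + 1) := hcount
    _ = k - 1 := by omega

theorem forcing_mem (k : ℕ) :
    ((k + 1) + k).choose (k + 1) ∈ {n | ∀ m, n ≤ m → ∀ G : SimpleGraph (Fin m), k ≤ nonposCount G} := by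
  intro m hm G
  have hcard : ((k + 1) + k).choose (k + 1) ≤ (Finset.univ : Finset (Fin m)).card := by
    rw [Finset.card_univ, Fintype.card_fin]; exact hm
  rcases ramsey_aux_s18 G ((k+1)+k) (k+1) k Finset.univ le_rfl hcard with
    ⟨f, hfi, _, hadj⟩ | ⟨f, hfi, _, hnadj⟩
  · exact clique_le_nonposCount G f hfi hadj
  · exact indep_le_nonposCount G f hfi hnadj

/-- for `k ≥ 5`, `NPO k > T_k = k (k + 1) / 2`; there is a graph on
`(k + 1).choose 2` vertices whose adjacency matrix has at most `k - 1` nonpositive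
eigenvalues. -/
theorem stmt18 (k : ℕ) (hk : 5 ≤ k) :
    k * (k + 1) / 2 < NPO k ∧
      ∃ G : SimpleGraph (Fin ((k + 1).choose 2)), nonposCount G ≤ k - 1 := by
  refine ⟨?_, witnessFin k hk⟩
  have hT : (k + 1).choose 2 = k * (k + 1) / 2 := by
    rw [Nat.choose_two_right]
    simp [Nat.mul_comm]
  by_contra hcon
  push_neg at hcon
  have hne : {n | ∀ m, n ≤ m → ∀ G : SimpleGraph (Fin m), k ≤ nonposCount G}.Nonempty :=
    ⟨_, forcing_mem k⟩
  have hmem := Nat.sInf_mem hne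
  obtain ⟨G, hG⟩ := witnessFin k hk
  have hle : NPO k ≤ (k + 1).choose 2 := by rw [hT]; exact hcon
  have := hmem ((k + 1).choose 2) hle G
  omega
end

section
/- Let k be a positive integer and G a graph on m ≥ NPO(k) vertices with degrees d_1 ≥ d_2 ≥ ... ≥ d_m and Laplacian eigenvalues λ_1 ≥ ... ≥ λ_m. Then λ_k ≥ d_{NPO(k)}. -/
open Matrix

/-- The Laplacian matrix of a simple graph over `ℝ` is Hermitian. -/
theorem lapHerm {V : Type*} [Fintype V] [DecidableEq V] (G : SimpleGraph V)
    [DecidableRel G.Adj] : (G.lapMatrix ℝ).IsHermitian := by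
  rw [Matrix.IsHermitian, conjTranspose_eq_transpose_of_trivial]
  exact G.isSymm_lapMatrix ℝ

/-- The `k`-th largest eigenvalue (`k` 0-indexed) of a real Hermitian matrix. -/
noncomputable def eigDescR {n : ℕ} {A : Matrix (Fin n) (Fin n) ℝ} (hA : A.IsHermitian)
    (k : Fin n) : ℝ :=
  hA.eigenvalues (Tuple.sort hA.eigenvalues k.rev)

/-- The `k`-th largest vertex degree (`k` 0-indexed) of a graph. -/
noncomputable def degDesc {m : ℕ} (G : SimpleGraph (Fin m)) [DecidableRel G.Adj]
    (k : Fin m) : ℕ :=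
  G.degree (Tuple.sort (fun i => G.degree i) k.rev)

section Helpers

open Matrix Finset

variable {n : ℕ} {A : Matrix (Fin n) (Fin n) ℝ} (hA : A.IsHermitian)



variable {n : ℕ} {A : Matrix (Fin n) (Fin n) ℝ} (hA : A.IsHermitian)

lemma dot_eq_inner (x y : EuclideanSpace ℝ (Fin n)) :
    @inner ℝ _ _ x y = (x : Fin n → ℝ) ⬝ᵥ (y : Fin n → ℝ) := by
  simp [PiLp.inner_apply, dotProduct]
  exact Finset.sum_congr rfl fun _ _ => mul_comm _ _

lemma repr_mulVec (x : EuclideanSpace ℝ (Fin n)) (i : Fin n) :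
    hA.eigenvectorBasis.repr (WithLp.toLp 2 (A *ᵥ x)) i
      = hA.eigenvalues i * hA.eigenvectorBasis.repr x i := by
  have hT : Aᵀ = A := by
    rw [← conjTranspose_eq_transpose_of_trivial]; exact hA
  rw [OrthonormalBasis.repr_apply_apply, OrthonormalBasis.repr_apply_apply,
    dot_eq_inner, dot_eq_inner]
  have h1 : (hA.eigenvectorBasis i : Fin n → ℝ) ⬝ᵥ (A *ᵥ x)
      = (A *ᵥ (hA.eigenvectorBasis i : Fin n → ℝ)) ⬝ᵥ x := by
    rw [dotProduct_mulVec, ← mulVec_transpose, hT]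
  have h2 := congrArg (fun v => v ⬝ᵥ (x : Fin n → ℝ)) (hA.mulVec_eigenvectorBasis i)
  simp only [smul_dotProduct, smul_eq_mul] at h2
  rw [WithLp.ofLp_toLp, h1]
  exact h2.trans rfl

lemma inner_expand (x y : EuclideanSpace ℝ (Fin n)) :
    (x : Fin n → ℝ) ⬝ᵥ (y : Fin n → ℝ)
      = ∑ i, hA.eigenvectorBasis.repr x i * hA.eigenvectorBasis.repr y i := by
  have h := (hA.eigenvectorBasis.repr.inner_map_map x y).symm
  rw [dot_eq_inner] at h
  rw [h]
  simp only [PiLp.inner_apply, RCLike.inner_apply, starRingEnd_apply, star_trivial]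
  exact Finset.sum_congr rfl fun _ _ => mul_comm _ _

lemma quad_expand (x : EuclideanSpace ℝ (Fin n)) :
    (x : Fin n → ℝ) ⬝ᵥ (A *ᵥ (x : Fin n → ℝ))
      = ∑ i, hA.eigenvalues i * (hA.eigenvectorBasis.repr x i)^2 := by
  have hie := inner_expand hA x (WithLp.toLp 2 (A *ᵥ x))
  simp only [WithLp.ofLp_toLp] at hie
  rw [hie]
  refine Finset.sum_congr rfl fun i _ => ?_
  rw [repr_mulVec hA x i]; ring

lemma repr_eq_zero_of_mem_span (T : Finset (Fin n)) (x : EuclideanSpace ℝ (Fin n))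
    (hx : x ∈ Submodule.span ℝ (hA.eigenvectorBasis '' (T : Set (Fin n)))) :
    ∀ j ∉ T, hA.eigenvectorBasis.repr x j = 0 := by
  intro j hj
  induction hx using Submodule.span_induction with
  | mem v hv =>
      obtain ⟨i, hi, rfl⟩ := hv
      simp only [OrthonormalBasis.repr_self, EuclideanSpace.single_apply]
      rw [if_neg]
      rintro rfl; exact hj hi
  | zero => simp
  | add v w _ _ hv hw => simp [map_add, hv, hw]
  | smul c v _ hv => simp [_root_.map_smul, hv]

lemma finrank_span_eigenvectors (T : Finset (Fin n)) :
    Module.finrank ℝ (Submodule.span ℝ (hA.eigenvectorBasis '' (T : Set (Fin n)))) = T.card := by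
  rw [Set.image_eq_range]
  have hli : LinearIndependent ℝ (fun x : (T : Set (Fin n)) => hA.eigenvectorBasis ↑x) :=
    (hA.eigenvectorBasis.orthonormal.linearIndependent).comp _ Subtype.val_injective
  rw [finrank_span_eq_card hli]
  exact Fintype.card_coe T
lemma exists_repr_ne_zero {x : EuclideanSpace ℝ (Fin n)} (hx : x ≠ 0) :
    ∃ i, hA.eigenvectorBasis.repr x i ≠ 0 := by
  by_contra h
  push_neg at h
  apply hx
  have : hA.eigenvectorBasis.repr x = 0 := by
    ext i; exact h i
  simpa using congrArg hA.eigenvectorBasis.repr.symm this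

lemma count_ge_of_subspace (k : ℕ) (c : ℝ) (W : Submodule ℝ (EuclideanSpace ℝ (Fin n)))
    (hdim : k ≤ Module.finrank ℝ W)
    (hq : ∀ x ∈ W, c * ((x : Fin n → ℝ) ⬝ᵥ (x : Fin n → ℝ)) ≤ (x : Fin n → ℝ) ⬝ᵥ (A *ᵥ (x : Fin n → ℝ))) :
    k ≤ (Finset.univ.filter fun i => c ≤ hA.eigenvalues i).card := by
  by_contra hlt
  push_neg at hlt
  classical
  set T : Finset (Fin n) := Finset.univ.filter (fun i => ¬ (c ≤ hA.eigenvalues i)) with hT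
  set U := Submodule.span ℝ (hA.eigenvectorBasis '' (T : Set (Fin n))) with hUdef
  have hcards : (Finset.univ.filter fun i => c ≤ hA.eigenvalues i).card + T.card = n := by
    rw [hT, Finset.card_filter_add_card_filter_not]; simp
  have hU : Module.finrank ℝ U = T.card := finrank_span_eigenvectors hA T
  have htot : Module.finrank ℝ (EuclideanSpace ℝ (Fin n)) = n := by
    simp [finrank_euclideanSpace]
  have hsum : n < Module.finrank ℝ W + Module.finrank ℝ U := by
    rw [hU]; omega
  have hpos : 0 < Module.finrank ℝ (W ⊓ U : Submodule ℝ (EuclideanSpace ℝ (Fin n))) := by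
    have h1 := Submodule.finrank_sup_add_finrank_inf_eq W U
    have h2 := Submodule.finrank_le (W ⊔ U)
    rw [htot] at h2
    omega
  rw [Module.finrank_pos_iff] at hpos
  obtain ⟨⟨x, hxWU⟩, hxne⟩ := exists_ne (0 : (W ⊓ U : Submodule ℝ (EuclideanSpace ℝ (Fin n))))
  have hx0 : x ≠ 0 := by
    intro h; apply hxne; ext; simp [h]
  have hxW : x ∈ W := hxWU.1
  have hxU : x ∈ U := hxWU.2
  have hrz : ∀ j ∉ T, hA.eigenvectorBasis.repr x j = 0 :=
    repr_eq_zero_of_mem_span hA T x hxU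
  obtain ⟨i₀, hi₀⟩ := exists_repr_ne_zero hA hx0
  have hi₀T : i₀ ∈ T := by
    by_contra h; exact hi₀ (hrz i₀ h)
  have hkey : (x : Fin n → ℝ) ⬝ᵥ (A *ᵥ (x : Fin n → ℝ)) < c * ((x : Fin n → ℝ) ⬝ᵥ (x : Fin n → ℝ)) := by
    rw [quad_expand hA x, inner_expand hA x x, Finset.mul_sum]
    apply Finset.sum_lt_sum
    · intro i _
      by_cases hiT : i ∈ T
      · have hlt' : hA.eigenvalues i < c := by
          rw [hT] at hiT; simp at hiT; exact hiT
        have : (hA.eigenvectorBasis.repr x i)^2 = hA.eigenvectorBasis.repr x i * hA.eigenvectorBasis.repr x i := sq _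
        nlinarith [sq_nonneg (hA.eigenvectorBasis.repr x i)]
      · rw [hrz i hiT]; ring_nf; exact le_refl _
    · refine ⟨i₀, Finset.mem_univ _, ?_⟩
      have hlt' : hA.eigenvalues i₀ < c := by
        rw [hT] at hi₀T; simp at hi₀T; exact hi₀T
      nlinarith [sq_pos_of_ne_zero hi₀, sq_abs (hA.eigenvectorBasis.repr x i₀)]
  exact absurd (hq x hxW) (not_le.mpr hkey)
lemma count_le_of_subspace (k : ℕ) (c : ℝ) (W : Submodule ℝ (EuclideanSpace ℝ (Fin n)))
    (hdim : k ≤ Module.finrank ℝ W)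
    (hq : ∀ x ∈ W, (x : Fin n → ℝ) ⬝ᵥ (A *ᵥ (x : Fin n → ℝ)) ≤ c * ((x : Fin n → ℝ) ⬝ᵥ (x : Fin n → ℝ))) :
    k ≤ (Finset.univ.filter fun i => hA.eigenvalues i ≤ c).card := by
  by_contra hlt
  push_neg at hlt
  classical
  set T : Finset (Fin n) := Finset.univ.filter (fun i => ¬ (hA.eigenvalues i ≤ c)) with hT
  set U := Submodule.span ℝ (hA.eigenvectorBasis '' (T : Set (Fin n))) with hUdef
  have hcards : (Finset.univ.filter fun i => hA.eigenvalues i ≤ c).card + T.card = n := by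
    rw [hT, Finset.card_filter_add_card_filter_not]; simp
  have hU : Module.finrank ℝ U = T.card := finrank_span_eigenvectors hA T
  have htot : Module.finrank ℝ (EuclideanSpace ℝ (Fin n)) = n := by
    simp [finrank_euclideanSpace]
  have hsum : n < Module.finrank ℝ W + Module.finrank ℝ U := by
    rw [hU]; omega
  have hpos : 0 < Module.finrank ℝ (W ⊓ U : Submodule ℝ (EuclideanSpace ℝ (Fin n))) := by
    have h1 := Submodule.finrank_sup_add_finrank_inf_eq W U
    have h2 := Submodule.finrank_le (W ⊔ U)
    rw [htot] at h2
    omega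
  rw [Module.finrank_pos_iff] at hpos
  obtain ⟨⟨x, hxWU⟩, hxne⟩ := exists_ne (0 : (W ⊓ U : Submodule ℝ (EuclideanSpace ℝ (Fin n))))
  have hx0 : x ≠ 0 := by
    intro h; apply hxne; ext; simp [h]
  have hxW : x ∈ W := hxWU.1
  have hxU : x ∈ U := hxWU.2
  have hrz : ∀ j ∉ T, hA.eigenvectorBasis.repr x j = 0 :=
    repr_eq_zero_of_mem_span hA T x hxU
  obtain ⟨i₀, hi₀⟩ := exists_repr_ne_zero hA hx0
  have hi₀T : i₀ ∈ T := by
    by_contra h; exact hi₀ (hrz i₀ h)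
  have hkey : c * ((x : Fin n → ℝ) ⬝ᵥ (x : Fin n → ℝ)) < (x : Fin n → ℝ) ⬝ᵥ (A *ᵥ (x : Fin n → ℝ)) := by
    rw [quad_expand hA x, inner_expand hA x x, Finset.mul_sum]
    apply Finset.sum_lt_sum
    · intro i _
      by_cases hiT : i ∈ T
      · have hlt' : c < hA.eigenvalues i := by
          rw [hT] at hiT; simp at hiT; exact hiT
        nlinarith [sq_nonneg (hA.eigenvectorBasis.repr x i)]
      · rw [hrz i hiT]; ring_nf; exact le_refl _
    · refine ⟨i₀, Finset.mem_univ _, ?_⟩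
      have hlt' : c < hA.eigenvalues i₀ := by
        rw [hT] at hi₀T; simp at hi₀T; exact hi₀T
      nlinarith [sq_pos_of_ne_zero hi₀, sq_abs (hA.eigenvectorBasis.repr x i₀)]
  exact absurd (hq x hxW) (not_le.mpr hkey)

/-- Lemma C: the span of eigenvectors with eigenvalue ≤ c has the quadratic form ≤ c·‖x‖². -/
lemma quad_le_on_span (c : ℝ) (T : Finset (Fin n)) (hTc : ∀ i ∈ T, hA.eigenvalues i ≤ c)
    (x : EuclideanSpace ℝ (Fin n))
    (hx : x ∈ Submodule.span ℝ (hA.eigenvectorBasis '' (T : Set (Fin n)))) :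
    (x : Fin n → ℝ) ⬝ᵥ (A *ᵥ (x : Fin n → ℝ)) ≤ c * ((x : Fin n → ℝ) ⬝ᵥ (x : Fin n → ℝ)) := by
  have hrz := repr_eq_zero_of_mem_span hA T x hx
  rw [quad_expand hA x, inner_expand hA x x, Finset.mul_sum]
  apply Finset.sum_le_sum
  intro i _
  by_cases hiT : i ∈ T
  · nlinarith [sq_nonneg (hA.eigenvectorBasis.repr x i), hTc i hiT]
  · rw [hrz i hiT]; ring_nf; exact le_refl _
/-- Extension-by-zero linear map along an injection of index types. -/
noncomputable def Emb {s m : ℕ} (ι : Fin s → Fin m) :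
    EuclideanSpace ℝ (Fin s) →ₗ[ℝ] EuclideanSpace ℝ (Fin m) :=
  (WithLp.linearEquiv 2 ℝ (Fin m → ℝ)).symm.toLinearMap ∘ₗ
    (Matrix.mulVecLin (Matrix.of fun j a => if j = ι a then (1:ℝ) else 0)) ∘ₗ
      (WithLp.linearEquiv 2 ℝ (Fin s → ℝ)).toLinearMap

lemma Emb_apply {s m : ℕ} (ι : Fin s → Fin m) (y : EuclideanSpace ℝ (Fin s)) (j : Fin m) :
    Emb ι y j = ∑ a, if j = ι a then y a else 0 := by
  simp only [Emb, LinearMap.coe_comp, Function.comp_apply, LinearEquiv.coe_toLinearMap,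
    Matrix.mulVecLin_apply, WithLp.linearEquiv_apply, WithLp.linearEquiv_symm_apply,
    Matrix.mulVec, dotProduct, Matrix.of_apply, ite_mul, one_mul,
    zero_mul]
  simp [WithLp.addEquiv, Matrix.mulVec, dotProduct]

lemma Emb_dot {s m : ℕ} (ι : Fin s → Fin m) (y : EuclideanSpace ℝ (Fin s)) (g : Fin m → ℝ) :
    (Emb ι y : Fin m → ℝ) ⬝ᵥ g = ∑ a, y a * g (ι a) := by
  simp only [dotProduct]
  calc ∑ j, (Emb ι y) j * g j
      = ∑ j, ∑ a, (if j = ι a then y a * g j else 0) := by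
        refine Finset.sum_congr rfl fun j _ => ?_
        rw [Emb_apply, Finset.sum_mul]
        refine Finset.sum_congr rfl fun a _ => ?_
        rw [ite_mul, zero_mul]
    _ = ∑ a, ∑ j, (if j = ι a then y a * g j else 0) := Finset.sum_comm
    _ = ∑ a, y a * g (ι a) := by
        refine Finset.sum_congr rfl fun a _ => ?_
        rw [Finset.sum_ite_eq' Finset.univ (ι a) (fun j => y a * g j)]
        simp

lemma Emb_apply_ι {s m : ℕ} {ι : Fin s → Fin m} (hι : Function.Injective ι)
    (y : EuclideanSpace ℝ (Fin s)) (a : Fin s) : Emb ι y (ι a) = y a := by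
  rw [Emb_apply]
  rw [Finset.sum_eq_single a]
  · simp
  · intro b _ hb
    rw [if_neg]
    exact fun h => hb (hι h.symm)
  · simp

lemma Emb_injective {s m : ℕ} {ι : Fin s → Fin m} (hι : Function.Injective ι) :
    Function.Injective (Emb ι) := by
  rw [injective_iff_map_eq_zero]
  intro y hy
  ext a
  have h2 : (Emb ι) y (ι a) = 0 := by rw [hy]; rfl
  rw [Emb_apply_ι hι] at h2
  simpa using h2

lemma Emb_dot_self {s m : ℕ} {ι : Fin s → Fin m} (hι : Function.Injective ι)
    (y : EuclideanSpace ℝ (Fin s)) :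
    (Emb ι y : Fin m → ℝ) ⬝ᵥ (Emb ι y : Fin m → ℝ) = (y : Fin s → ℝ) ⬝ᵥ (y : Fin s → ℝ) := by
  rw [Emb_dot]
  refine Finset.sum_congr rfl fun a _ => ?_
  rw [Emb_apply_ι hι]

lemma Emb_quad {s m : ℕ} {ι : Fin s → Fin m} (hι : Function.Injective ι)
    (M : Matrix (Fin m) (Fin m) ℝ) (y : EuclideanSpace ℝ (Fin s)) :
    (Emb ι y : Fin m → ℝ) ⬝ᵥ (M *ᵥ (Emb ι y : Fin m → ℝ))
      = ∑ a, ∑ b, y a * (M (ι a) (ι b) * y b) := by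
  rw [Emb_dot]
  refine Finset.sum_congr rfl fun a _ => ?_
  have h3 : (M *ᵥ (Emb ι y : Fin m → ℝ)) (ι a) = ∑ b, y b * M (ι a) (ι b) := by
    show M (ι a) ⬝ᵥ _ = _
    rw [dotProduct_comm]
    exact Emb_dot ι y (M (ι a))
  rw [h3, Finset.mul_sum]
  exact Finset.sum_congr rfl fun b _ => by ring
lemma card_filter_perm {n : ℕ} (σ : Equiv.Perm (Fin n)) (p : Fin n → Prop) [DecidablePred p] :
    (Finset.univ.filter fun j => p (σ j)).card = (Finset.univ.filter p).card := by
  apply Finset.card_bij (fun j _ => σ j)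
  · intro j hj
    simp only [Finset.mem_filter, Finset.mem_univ, true_and] at hj ⊢
    exact hj
  · intro a _ b _ hab
    exact σ.injective hab
  · intro i hi
    refine ⟨σ.symm i, ?_, by simp⟩
    simp only [Finset.mem_filter, Finset.mem_univ, true_and] at hi ⊢
    simpa using hi

/-- If at least `k` values of `f` satisfy `c ≤ ·`, then the value at descending
position `k` (i.e. ascending position `n - k`) is at least `c`. -/
lemma sorted_ge_of_count {n k : ℕ} (f : Fin n → ℝ) (c : ℝ) (hk1 : 1 ≤ k) (hkn : k ≤ n)
    (hcard : k ≤ (Finset.univ.filter fun i => c ≤ f i).card) (p : Fin n) (hp : (p : ℕ) = n - k) :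
    c ≤ f (Tuple.sort f p) := by
  by_contra hcon
  push_neg at hcon
  have mono := Tuple.monotone_sort f
  have hsub : (Finset.univ.filter fun j => c ≤ f (Tuple.sort f j)) ⊆ Finset.Ioi p := by
    intro j hj
    simp only [Finset.mem_filter, Finset.mem_univ, true_and] at hj
    rw [Finset.mem_Ioi]
    by_contra hpj
    push_neg at hpj
    have hm : f (Tuple.sort f j) ≤ f (Tuple.sort f p) := mono hpj
    linarith
  have h1 : (Finset.univ.filter fun j => c ≤ f (Tuple.sort f j)).card ≤ (Finset.Ioi p).card :=
    Finset.card_le_card hsub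
  rw [Fin.card_Ioi, card_filter_perm (Tuple.sort f) (fun i => c ≤ f i)] at h1
  omega
/-- A Ramsey-type bound. -/
def Rnum : ℕ → ℕ → ℕ
  | 0, _ => 0
  | _+1, 0 => 0
  | s+1, t+1 => Rnum s (t+1) + Rnum (s+1) t + 1

lemma Rnum_succ_succ (s t : ℕ) : Rnum (s+1) (t+1) = Rnum s (t+1) + Rnum (s+1) t + 1 := by
  simp [Rnum]

lemma ramsey_aux_s19 : ∀ N s t, s + t ≤ N → ∀ {V : Type*} [DecidableEq V] [Fintype V]
    (G : SimpleGraph V) [DecidableRel G.Adj] (U : Finset V), Rnum s t ≤ U.card →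
    (∃ C : Finset V, C ⊆ U ∧ C.card = s ∧ G.IsClique (C : Set V)) ∨
    (∃ I : Finset V, I ⊆ U ∧ I.card = t ∧ Gᶜ.IsClique (I : Set V)) := by
  intro N
  induction N with
  | zero =>
    intro s t hst V _ _ G _ U _
    have hs : s = 0 := by omega
    subst hs
    exact Or.inl ⟨∅, Finset.empty_subset _, Finset.card_empty, by simp⟩
  | succ N ih =>
    intro s t hst V _ _ G _ U hU
    match s, t with
    | 0, t => exact Or.inl ⟨∅, Finset.empty_subset _, Finset.card_empty, by simp⟩
    | s+1, 0 => exact Or.inr ⟨∅, Finset.empty_subset _, Finset.card_empty, by simp⟩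
    | s+1, t+1 =>
      have hUpos : 0 < U.card := by
        have : 0 < Rnum (s+1) (t+1) := by rw [Rnum_succ_succ s t]; omega
        omega
      obtain ⟨v, hv⟩ := Finset.card_pos.mp hUpos
      set N₁ := (U.erase v).filter (fun w => G.Adj v w) with hN₁
      set N₂ := (U.erase v).filter (fun w => ¬ G.Adj v w) with hN₂
      have hcards : N₁.card + N₂.card = (U.erase v).card :=
        Finset.card_filter_add_card_filter_not _
      have herase : (U.erase v).card = U.card - 1 := Finset.card_erase_of_mem hv
      have hRU : Rnum s (t+1) + Rnum (s+1) t + 1 ≤ U.card := by rw [Rnum_succ_succ s t] at hU; exact hU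
      have hcase : Rnum s (t+1) ≤ N₁.card ∨ Rnum (s+1) t ≤ N₂.card := by omega
      rcases hcase with h1 | h2
      · rcases ih s (t+1) (by omega) G N₁ h1 with ⟨C, hCsub, hCcard, hCcl⟩ | ⟨I, hIsub, hIcard, hIcl⟩
        · refine Or.inl ⟨insert v C, ?_, ?_, ?_⟩
          · intro x hx
            rcases Finset.mem_insert.mp hx with rfl | hx
            · exact hv
            · exact Finset.erase_subset _ _ (Finset.filter_subset _ _ (hCsub hx))
          · rw [Finset.card_insert_of_notMem, hCcard]
            intro hvC
            exact (Finset.notMem_erase v U) (Finset.filter_subset _ _ (hCsub hvC))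
          · rw [Finset.coe_insert]
            refine hCcl.insert fun b hb _ => ?_
            have := hCsub hb
            rw [hN₁, Finset.mem_filter] at this
            exact this.2
        · exact Or.inr ⟨I, hIsub.trans ((Finset.filter_subset _ _).trans (Finset.erase_subset _ _)), hIcard, hIcl⟩
      · rcases ih (s+1) t (by omega) G N₂ h2 with ⟨C, hCsub, hCcard, hCcl⟩ | ⟨I, hIsub, hIcard, hIcl⟩
        · exact Or.inl ⟨C, hCsub.trans ((Finset.filter_subset _ _).trans (Finset.erase_subset _ _)), hCcard, hCcl⟩
        · refine Or.inr ⟨insert v I, ?_, ?_, ?_⟩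
          · intro x hx
            rcases Finset.mem_insert.mp hx with rfl | hx
            · exact hv
            · exact Finset.erase_subset _ _ (Finset.filter_subset _ _ (hIsub hx))
          · rw [Finset.card_insert_of_notMem, hIcard]
            intro hvI
            exact (Finset.notMem_erase v U) (Finset.filter_subset _ _ (hIsub hvI))
          · rw [Finset.coe_insert]
            refine hIcl.insert fun b hb hne => ?_
            have hb2 := hIsub hb
            rw [hN₂, Finset.mem_filter] at hb2
            exact SimpleGraph.compl_adj G v b |>.mpr ⟨hne, hb2.2⟩
/-- The sum-of-coordinates functional. -/
noncomputable def sumF (s : ℕ) : EuclideanSpace ℝ (Fin s) →ₗ[ℝ] ℝ where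
  toFun y := ∑ a, y a
  map_add' y z := by
    simp only [← Finset.sum_add_distrib]
    exact Finset.sum_congr rfl fun a _ => rfl
  map_smul' r y := by
    simp only [RingHom.id_apply, Finset.smul_sum]
    exact Finset.sum_congr rfl fun a _ => rfl


lemma count_nonpos_adj {mm k : ℕ} (G : SimpleGraph (Fin mm)) [DecidableRel G.Adj]
    (hram : Rnum (k+1) k ≤ mm) :
    k ≤ (Finset.univ.filter fun i => (adjHerm G).eigenvalues i ≤ 0).card := by
  have hcardU : Rnum (k+1) k ≤ (Finset.univ : Finset (Fin mm)).card := by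
    simpa using hram
  rcases ramsey_aux_s19 ((k+1)+k) (k+1) k le_rfl G Finset.univ hcardU with
    ⟨C, _, hCcard, hCcl⟩ | ⟨I, _, hIcard, hIcl⟩
  · -- clique of size k+1
    set ι : Fin (k+1) → Fin mm := fun a => (C.orderIsoOfFin hCcard a : Fin mm) with hι_def
    have hι : Function.Injective ι :=
      fun a b hab => (C.orderIsoOfFin hCcard).injective (Subtype.val_injective hab)
    have hιC : ∀ a, ι a ∈ C := fun a => (C.orderIsoOfFin hCcard a).2
    set W := (LinearMap.ker (sumF (k+1))).map (Emb ι) with hW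
    have hdim : k ≤ Module.finrank ℝ W := by
      have h1 := LinearMap.finrank_range_add_finrank_ker (sumF (k+1))
      have h2 : Module.finrank ℝ (LinearMap.range (sumF (k+1))) ≤ 1 := by
        have := Submodule.finrank_le (LinearMap.range (sumF (k+1)))
        simpa using this
      have h3 : Module.finrank ℝ (EuclideanSpace ℝ (Fin (k+1))) = k+1 := by
        simp [finrank_euclideanSpace]
      rw [h3] at h1
      have h4 : Module.finrank ℝ W = Module.finrank ℝ (LinearMap.ker (sumF (k+1))) :=
        (LinearEquiv.finrank_eq
          (Submodule.equivMapOfInjective (Emb ι) (Emb_injective hι) _)).symm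
      omega
    refine count_le_of_subspace (adjHerm G) k 0 W hdim ?_
    intro x hx
    rw [hW, Submodule.mem_map] at hx
    obtain ⟨y, hy, rfl⟩ := hx
    have hsum : ∑ a, y a = 0 := hy
    rw [Emb_quad hι]
    have hent : ∀ a b, (G.adjMatrix ℝ) (ι a) (ι b) = if a = b then 0 else 1 := by
      intro a b
      by_cases hab : a = b
      · subst hab; simp [SimpleGraph.adjMatrix_apply]
      · have hadj : G.Adj (ι a) (ι b) := hCcl (hιC a) (hιC b) (fun h => hab (hι h))
        simp [SimpleGraph.adjMatrix_apply, hadj, hab]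
    have hQ : ∑ a, ∑ b, y a * ((G.adjMatrix ℝ) (ι a) (ι b) * y b)
        = (∑ a, y a) * (∑ b, y b) - ∑ a, y a * y a := by
      rw [Finset.sum_mul_sum, ← Finset.sum_sub_distrib]
      refine Finset.sum_congr rfl fun a _ => ?_
      simp only [hent]
      have hterm : ∀ b : Fin (k+1), y a * ((if a = b then (0:ℝ) else 1) * y b)
          = y a * y b - (if a = b then y a * y b else 0) := by
        intro b; by_cases h : a = b <;> simp [h]
      rw [Finset.sum_congr rfl fun b _ => hterm b, Finset.sum_sub_distrib,
        Finset.sum_ite_eq Finset.univ a (fun b => y a * y b)]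
      simp
    rw [hQ, hsum, zero_mul, zero_mul]
    have : (0:ℝ) ≤ ∑ a, y a * y a := Finset.sum_nonneg fun a _ => mul_self_nonneg _
    linarith
  · -- independent set of size k
    set ι : Fin k → Fin mm := fun a => (I.orderIsoOfFin hIcard a : Fin mm) with hι_def
    have hι : Function.Injective ι :=
      fun a b hab => (I.orderIsoOfFin hIcard).injective (Subtype.val_injective hab)
    have hιI : ∀ a, ι a ∈ I := fun a => (I.orderIsoOfFin hIcard a).2
    set W := LinearMap.range (Emb ι) with hW
    have hdim : k ≤ Module.finrank ℝ W := by
      rw [hW, LinearMap.finrank_range_of_inj (Emb_injective hι)]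
      simp [finrank_euclideanSpace]
    refine count_le_of_subspace (adjHerm G) k 0 W hdim ?_
    intro x hx
    rw [hW, LinearMap.mem_range] at hx
    obtain ⟨y, rfl⟩ := hx
    rw [Emb_quad hι]
    have hnadj : ∀ a b : Fin k, ¬ G.Adj (ι a) (ι b) := by
      intro a b
      by_cases hab : a = b
      · subst hab; simp
      · exact ((SimpleGraph.compl_adj G _ _).mp (hIcl (hιI a) (hιI b) (fun h => hab (hι h)))).2
    simp [hnadj]
lemma dot_mulVec_expand {n : ℕ} (M : Matrix (Fin n) (Fin n) ℝ) (y : Fin n → ℝ) :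
    y ⬝ᵥ (M *ᵥ y) = ∑ a, ∑ b, y a * (M a b * y b) := by
  simp [dotProduct, Matrix.mulVec, Finset.mul_sum]


lemma NPO_facts (k : ℕ) (hk : 1 ≤ k) :
    (∀ m', NPO k ≤ m' → ∀ G : SimpleGraph (Fin m'), k ≤ nonposCount G) ∧ 1 ≤ NPO k := by
  have hne : {n | ∀ m, n ≤ m → ∀ G : SimpleGraph (Fin m), k ≤ nonposCount G}.Nonempty := by
    refine ⟨Rnum (k+1) k, fun m hm G => ?_⟩
    letI := Classical.decRel G.Adj
    exact count_nonpos_adj G hm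
  have hmem := Nat.sInf_mem hne
  refine ⟨hmem, ?_⟩
  by_contra h0
  push_neg at h0
  have h00 : NPO k = 0 := by omega
  have hNy : NPO k ≤ 0 := le_of_eq h00
  have hcon := hmem 0 hNy ⊥
  have hle : nonposCount (⊥ : SimpleGraph (Fin 0)) = 0 := by
    show (Finset.filter _ _).card = 0
    rw [Finset.eq_empty_of_isEmpty (Finset.filter _ _), Finset.card_empty]
  omega

end Helpers

/-- for a graph `G` on `m ≥ NPO k` vertices, the `k`-th largest Laplacian
eigenvalue is at least the `NPO k`-th largest degree (both in 1-based convention). -/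
theorem stmt19 (k m : ℕ) (hk : 1 ≤ k) (hm : NPO k ≤ m) (G : SimpleGraph (Fin m))
    [DecidableRel G.Adj] (hL : (G.lapMatrix ℝ).IsHermitian)
    (h1 : k - 1 < m) (h2 : NPO k - 1 < m) :
    (degDesc G ⟨NPO k - 1, h2⟩ : ℝ) ≤ eigDescR hL ⟨k - 1, h1⟩ := by
  obtain ⟨hNPO, hs1⟩ := NPO_facts k hk
  set s := NPO k with hsdef
  have hsm : s ≤ m := hm
  have hkm : k ≤ m := by omega
  set d : ℕ := degDesc G ⟨s-1, h2⟩ with hd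
  have hrevs : ((⟨s-1, h2⟩ : Fin m).rev : ℕ) = m - s := by
    rw [Fin.val_rev]
    show m - (s - 1 + 1) = m - s
    omega
  have hι_lt : ∀ a : Fin s, m - s + (a : ℕ) < m := fun a => by omega
  set ι : Fin s → Fin m := fun a => Tuple.sort (fun i => G.degree i) ⟨m - s + a, hι_lt a⟩ with hιdef
  have hι : Function.Injective ι := by
    intro a b hab
    have h := (Tuple.sort (fun i => G.degree i)).injective hab
    have h' := congrArg Fin.val h
    simp only at h'
    exact Fin.ext (by omega)
  have hdeg : ∀ a : Fin s, (d : ℝ) ≤ (G.degree (ι a) : ℝ) := by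
    intro a
    have mono := Tuple.monotone_sort (fun i : Fin m => G.degree i)
    have hle : (⟨s-1, h2⟩ : Fin m).rev ≤ ⟨m - s + a, hι_lt a⟩ := by
      rw [Fin.le_def, hrevs]
      show m - s ≤ m - s + (a : ℕ)
      exact Nat.le_add_right _ _
    have hmono := mono hle
    rw [hd]
    unfold degDesc
    exact_mod_cast hmono
  set H : SimpleGraph (Fin s) := SimpleGraph.comap ι G with hHdef
  have hH : k ≤ nonposCount H := hNPO s le_rfl H
  letI instH : DecidableRel H.Adj := Classical.decRel H.Adj
  set hAH : ((H.adjMatrix ℝ)).IsHermitian := adjHerm H with hAHdef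
  set T : Finset (Fin s) := Finset.univ.filter (fun i => hAH.eigenvalues i ≤ 0) with hTdef
  have hTcard : k ≤ T.card := hH
  set WH := Submodule.span ℝ (hAH.eigenvectorBasis '' (T : Set (Fin s))) with hWHdef
  have hWq : ∀ y ∈ WH, (y : Fin s → ℝ) ⬝ᵥ ((H.adjMatrix ℝ) *ᵥ (y : Fin s → ℝ)) ≤ 0 :=
    fun y hy => by
      have := quad_le_on_span hAH 0 T (fun i hi => (Finset.mem_filter.mp hi).2) y hy
      simpa using this
  set W := WH.map (Emb ι) with hWdef
  have hdim : k ≤ Module.finrank ℝ W := by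
    have h4 : Module.finrank ℝ W = Module.finrank ℝ WH :=
      (LinearEquiv.finrank_eq (Submodule.equivMapOfInjective (Emb ι) (Emb_injective hι) WH)).symm
    rw [h4, hWHdef, finrank_span_eigenvectors hAH T]
    exact hTcard
  have hq : ∀ x ∈ W, (d : ℝ) * ((x : Fin m → ℝ) ⬝ᵥ (x : Fin m → ℝ))
      ≤ (x : Fin m → ℝ) ⬝ᵥ ((G.lapMatrix ℝ) *ᵥ (x : Fin m → ℝ)) := by
    intro x hx
    rw [hWdef, Submodule.mem_map] at hx
    obtain ⟨y, hy, rfl⟩ := hx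
    rw [Emb_quad hι (G.lapMatrix ℝ) y, Emb_dot_self hι]
    have hLent : ∀ a b : Fin s, (G.lapMatrix ℝ) (ι a) (ι b)
        = (if a = b then (G.degree (ι a) : ℝ) else 0) - (H.adjMatrix ℝ) a b := by
      intro a b
      by_cases hab : a = b
      · subst hab
        simp [SimpleGraph.lapMatrix, Matrix.sub_apply, SimpleGraph.degMatrix,
          Matrix.diagonal_apply_eq, SimpleGraph.adjMatrix_apply]
      · have hne : ι a ≠ ι b := fun h => hab (hι h)
        simp only [SimpleGraph.lapMatrix, Matrix.sub_apply, SimpleGraph.degMatrix,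
          Matrix.diagonal_apply_ne _ hne, SimpleGraph.adjMatrix_apply, if_neg hab,
          SimpleGraph.comap_adj, hHdef]
    have hsplit : ∑ a, ∑ b, y a * ((G.lapMatrix ℝ) (ι a) (ι b) * y b)
        = (∑ a, (G.degree (ι a) : ℝ) * (y a * y a))
          - (y : Fin s → ℝ) ⬝ᵥ ((H.adjMatrix ℝ) *ᵥ (y : Fin s → ℝ)) := by
      rw [dot_mulVec_expand, ← Finset.sum_sub_distrib]
      refine Finset.sum_congr rfl fun a _ => ?_
      have hinner : ∀ b : Fin s, y a * ((G.lapMatrix ℝ) (ι a) (ι b) * y b)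
          = (if a = b then (G.degree (ι a) : ℝ) * (y a * y b) else 0)
            - y a * ((H.adjMatrix ℝ) a b * y b) := by
        intro b
        rw [hLent a b]
        by_cases hab : a = b <;> simp [hab] <;> ring
      rw [Finset.sum_congr rfl fun b _ => hinner b, Finset.sum_sub_distrib,
        Finset.sum_ite_eq Finset.univ a (fun b => (G.degree (ι a) : ℝ) * (y a * y b))]
      simp
    rw [hsplit]
    have hQH := hWq y hy
    have hdegsum : (d : ℝ) * ((y : Fin s → ℝ) ⬝ᵥ (y : Fin s → ℝ))
        ≤ ∑ a, (G.degree (ι a) : ℝ) * (y a * y a) := by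
      rw [dotProduct, Finset.mul_sum]
      refine Finset.sum_le_sum fun a _ => ?_
      exact mul_le_mul_of_nonneg_right (hdeg a) (mul_self_nonneg _)
    linarith
  have hcount := count_ge_of_subspace hL k (d : ℝ) W hdim hq
  have hp : (((⟨k-1, h1⟩ : Fin m).rev : ℕ)) = m - k := by
    rw [Fin.val_rev]
    show m - (k - 1 + 1) = m - k
    omega
  have hres := sorted_ge_of_count hL.eigenvalues (d : ℝ) hk hkm hcount _ hp
  exact hres
end
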